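/- arXiv:2002.07459 — 5 statements merged into one kernel-verified Lean document; each statement's English description precedes it below -/
import Mathlib

section
/- Let U ∈ ℝ^{N×L} satisfy U Uᵀ = Id_N, and for 1 ≤ k ≤ L−1 write U = (V_k W_k) with V_k ∈ ℝ^{N×k}, W_k ∈ ℝ^{N×(L−k)}. Assume V_k and W_k are of full rank. If k ≤ N and k ≤ L−k, then for every eigenvalue λ of the j-th compound matrix Λ^j(V_kᵀ (W_k W_kᵀ)^{-1} V_k) there is an eigenvalue μ of Λ^{k−j}(V_kᵀ (W_k W_kᵀ)^{-1} V_k) with λ·μ = det(V_kᵀ V_k) / det(W_k W_kᵀ). -/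
open Matrix

noncomputable def eigsDesc {n : ℕ} {A : Matrix (Fin n) (Fin n) ℝ} (hA : A.IsHermitian) : Fin n → ℝ :=
  fun i => (hA.eigenvalues ∘ Tuple.sort hA.eigenvalues) i.rev

noncomputable def svDesc {m n : ℕ} (A : Matrix (Fin m) (Fin n) ℝ) : Fin n → ℝ :=
  fun i => Real.sqrt (eigsDesc (Matrix.isHermitian_conjTranspose_mul_self A) i)

noncomputable def slaterEntry {N L : ℕ} (U : Matrix (Fin N) (Fin L) ℝ) (o : Fin L → Bool) : ℝ :=
  if h : (Finset.univ.filter fun p => o p = true).card = N then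
    (U.submatrix id ((Finset.univ.filter fun p => o p = true).orderEmbOfFin h)).det
  else 0

noncomputable def compound {k : ℕ} (j : ℕ) (A : Matrix (Fin k) (Fin k) ℝ) :
    Matrix {s : Finset (Fin k) // s.card = j} {s : Finset (Fin k) // s.card = j} ℝ :=
  fun σ τ => (A.submatrix (σ.1.orderEmbOfFin σ.2) (τ.1.orderEmbOfFin τ.2)).det

def IsEigenvalue {ι : Type*} [Fintype ι] (M : Matrix ι ι ℝ) (lam : ℝ) : Prop :=
  ∃ v : ι → ℝ, v ≠ 0 ∧ M.mulVec v = lam • v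

noncomputable def slaterReshape {N L : ℕ} (U : Matrix (Fin N) (Fin L) ℝ) (k : ℕ) :
    Matrix (Fin (2 ^ k)) (Fin (2 ^ (L - k))) ℝ :=
  fun a b => slaterEntry U fun p =>
    if p.val < k then a.val.testBit p.val else b.val.testBit (p.val - k)

def leftBlock {N L : ℕ} (U : Matrix (Fin N) (Fin L) ℝ) (k : ℕ) (hk : k ≤ L) :
    Matrix (Fin N) (Fin k) ℝ :=
  U.submatrix id (fun i => Fin.castLE hk i)

def rightBlock {N L : ℕ} (U : Matrix (Fin N) (Fin L) ℝ) (k : ℕ) :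
    Matrix (Fin N) (Fin (L - k)) ℝ :=
  U.submatrix id (fun i => ⟨k + i.val, by have := i.isLt; omega⟩)

def shiftEmb (k L : ℕ) : Fin (L - k) ↪ Fin L :=
  ⟨fun i => ⟨k + i.val, by have := i.isLt; omega⟩, by
    intro a b h
    have : k + a.val = k + b.val := congrArg Fin.val h
    exact Fin.ext (by omega)⟩

noncomputable def Cmat {N L : ℕ} (k : ℕ) (hk : k ≤ L) (U : Matrix (Fin N) (Fin L) ℝ) (j : ℕ) :
    Matrix {s : Finset (Fin k) // s.card = j} {s : Finset (Fin (L - k)) // s.card = N - j} ℝ :=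
  fun σ ρ => slaterEntry U fun p =>
    decide (p ∈ σ.1.map (Fin.castLEEmb hk) ∪ ρ.1.map (shiftEmb k L))

def blockSym {m n : ℕ} (A : Matrix (Fin m) (Fin n) ℝ) : Matrix (Fin (m + n)) (Fin (m + n)) ℝ :=
  (Matrix.fromBlocks 0 A Aᵀ 0).submatrix finSumFinEquiv.symm finSumFinEquiv.symm

/-!
The matrix `M = Vᵀ (W Wᵀ)⁻¹ V` is symmetric, so `M = Q diag(d) Q⁻¹`. Compound matrices are
multiplicative (Cauchy–Binet), hence `Λʲ(M)` is similar to the diagonal matrix of the products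
`∏_{i ∈ S} dᵢ` over `j`-subsets `S`. An eigenvalue `λ = ∏_{i ∈ S} dᵢ` is then paired with the
eigenvalue `μ = ∏_{i ∉ S} dᵢ` of `Λᵏ⁻ʲ(M)`, and `λ μ = det M`. Finally `W Wᵀ = 1 - V Vᵀ`, and the
push-through identity `Vᵀ (1 - V Vᵀ)⁻¹ = (1 - Vᵀ V)⁻¹ Vᵀ` together with Sylvester's
`det (1 - V Vᵀ) = det (1 - Vᵀ V)` gives `det M = det (Vᵀ V) / det (W Wᵀ)`.
-/

open Finset Function

theorem Finset.sum_injective_eq_sum_orderEmbOfFin_comp {M : Type*} [AddCommMonoid M] {j k : ℕ}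
    (g : (Fin j → Fin k) → M) :
    ∑ f with Injective f, g f = ∑ S : {s : Finset (Fin k) // s.card = j},
      ∑ σ : Equiv.Perm (Fin j), g (S.1.orderEmbOfFin S.2 ∘ σ) := by
  rw [← Fintype.sum_prod_type']
  refine (sum_bij (fun p _ => p.1.1.orderEmbOfFin p.1.2 ∘ p.2) ?_ ?_ ?_ fun _ _ => rfl).symm
  · intro p _
    simpa using (p.1.1.orderEmbOfFin p.1.2).injective.comp p.2.injective
  · rintro ⟨S, σ⟩ - ⟨T, τ⟩ - h
    have hST : S = T := by
      apply Subtype.ext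
      have hrange := congrArg Set.range h
      simp only [EquivLike.range_comp, range_orderEmbOfFin] at hrange
      exact_mod_cast hrange
    subst hST
    exact Prod.ext rfl (Equiv.ext fun i => (S.1.orderEmbOfFin S.2).injective (congrFun h i))
  · intro f hf
    have hf : Injective f := (mem_filter.mp hf).2
    have hcard : (univ.image f).card = j := by simp [card_image_of_injective _ hf]
    have hsort : f ∘ Tuple.sort f = (univ.image f).orderEmbOfFin hcard :=
      orderEmbOfFin_unique hcard (fun i => mem_image_of_mem f (mem_univ _))
        ((Tuple.monotone_sort f).strictMono_of_injective (hf.comp (Tuple.sort f).injective))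
    refine ⟨(⟨_, hcard⟩, (Tuple.sort f)⁻¹), mem_univ _, ?_⟩
    simp [← hsort, comp_assoc]

namespace Matrix

variable {R : Type*} [CommRing R]

theorem det_mul_eq_sum_prod_mul_det_submatrix {m n : Type*} [Fintype m] [DecidableEq m]
    [Fintype n] (A : Matrix m n R) (B : Matrix n m R) :
    (A * B).det = ∑ f : m → n, (∏ i, A i (f i)) * (B.submatrix f id).det := by
  have hrows : A * B = of fun i => ∑ r, A i r • B r := by
    ext i l
    simp [mul_apply, Finset.sum_apply]
  calc (A * B).det = detRowAlternating fun i => ∑ r, A i r • B r := congrArg det hrows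
    _ = ∑ f : m → n, detRowAlternating fun i => A i (f i) • B (f i) :=
      detRowAlternating.toMultilinearMap.map_sum _
    _ = _ := by simp only [AlternatingMap.map_smul_univ, smul_eq_mul]; rfl

theorem det_submatrix_eq_zero_of_not_injective {m n : Type*} [Fintype m] [DecidableEq m]
    (B : Matrix n m R) {f : m → n} (hf : ¬Injective f) : (B.submatrix f id).det = 0 := by
  obtain ⟨a, b, hab, hne⟩ := not_injective_iff.mp hf
  exact det_zero_of_row_eq hne (by ext; simp [hab])

theorem det_mul_eq_sum_det_submatrix_mul {j k : ℕ} (A : Matrix (Fin j) (Fin k) R)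
    (B : Matrix (Fin k) (Fin j) R) :
    (A * B).det = ∑ S : {s : Finset (Fin k) // s.card = j},
      (A.submatrix id (S.1.orderEmbOfFin S.2)).det *
        (B.submatrix (S.1.orderEmbOfFin S.2) id).det := by
  rw [det_mul_eq_sum_prod_mul_det_submatrix,
    ← sum_filter_of_ne fun f _ hf => not_not.mp fun hinj =>
      hf (by rw [det_submatrix_eq_zero_of_not_injective B hinj, mul_zero]),
    sum_injective_eq_sum_orderEmbOfFin_comp]
  refine sum_congr rfl fun S _ => ?_
  set e := S.1.orderEmbOfFin S.2
  calc ∑ σ : Equiv.Perm (Fin j), (∏ i, A i (e (σ i))) * (B.submatrix (e ∘ σ) id).det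
      = ∑ σ : Equiv.Perm (Fin j),
          ((Equiv.Perm.sign σ : R) * ∏ i, A i (e (σ i))) * (B.submatrix e id).det := by
        refine sum_congr rfl fun σ _ => ?_
        rw [show B.submatrix (e ∘ σ) id = (B.submatrix e id).submatrix σ id from rfl,
          det_permute]
        ring
    _ = _ := by
        rw [← sum_mul, ← det_transpose (A.submatrix id e), det_apply' (A.submatrix id e)ᵀ]
        rfl

theorem det_mul_inv_one_sub_mul_mul {K m n : Type*} [Field K] [Fintype m] [DecidableEq m]
    [Fintype n] [DecidableEq n] (A : Matrix m n K) (B : Matrix n m K) :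
    (B * (1 - A * B)⁻¹ * A).det = (B * A).det / (1 - A * B).det := by
  rcases eq_or_ne (1 - A * B).det 0 with hsing | hreg
  · -- both sides vanish: the junk inverse of a singular matrix is `0`, and `x / 0 = 0`
    have : Nonempty n := by
      by_contra hn
      have hdet := det_one_sub_mul_comm A B
      have := not_nonempty_iff.mp hn
      rw [hsing, det_isEmpty] at hdet
      exact zero_ne_one hdet
    rw [nonsing_inv_apply_not_isUnit _ (by rwa [isUnit_iff_ne_zero, not_not]), Matrix.mul_zero,
      Matrix.zero_mul, det_zero, hsing, div_zero]
  · have hreg' : IsUnit (1 - B * A).det := by rwa [isUnit_iff_ne_zero, ← det_one_sub_mul_comm]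
    have hpush : B * (1 - A * B)⁻¹ = (1 - B * A)⁻¹ * B := by
      rw [← nonsing_inv_mul_cancel_left (A := 1 - B * A) (B * (1 - A * B)⁻¹) hreg',
        show (1 - B * A) * (B * (1 - A * B)⁻¹) = B * ((1 - A * B) * (1 - A * B)⁻¹) by
          simp only [Matrix.sub_mul, Matrix.mul_sub, Matrix.one_mul, Matrix.mul_assoc],
        mul_nonsing_inv _ (isUnit_iff_ne_zero.mpr hreg), Matrix.mul_one]
    rw [hpush, Matrix.mul_assoc, det_mul, det_nonsing_inv, Ring.inverse_eq_inv,
      ← det_one_sub_mul_comm, div_eq_inv_mul]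

end Matrix

theorem isEigenvalue_iff_mem_spectrum {ι : Type*} [Fintype ι] [DecidableEq ι]
    (M : Matrix ι ι ℝ) (lam : ℝ) : IsEigenvalue M lam ↔ lam ∈ spectrum ℝ M := by
  rw [← spectrum_toLin', ← Module.End.hasEigenvalue_iff_mem_spectrum,
    Module.End.HasEigenvalue, Module.End.HasUnifEigenvalue, Submodule.ne_bot_iff]
  simp [IsEigenvalue, Module.End.mem_genEigenspace_one, and_comm]

section Compound

variable {k : ℕ}

theorem compound_mul (j : ℕ) (A B : Matrix (Fin k) (Fin k) ℝ) :
    compound j (A * B) = compound j A * compound j B := by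
  ext σ τ
  rw [compound, submatrix_mul _ _ _ id _ bijective_id, det_mul_eq_sum_det_submatrix_mul, mul_apply]
  rfl

theorem compound_diagonal (j : ℕ) (d : Fin k → ℝ) :
    compound j (diagonal d) =
      diagonal fun S : {s : Finset (Fin k) // s.card = j} => ∏ i ∈ S.1, d i := by
  ext σ τ
  by_cases hστ : σ = τ
  · subst hστ
    rw [diagonal_apply_eq, compound, submatrix_diagonal _ _ (σ.1.orderEmbOfFin σ.2).injective,
      det_diagonal]
    conv_rhs => rw [← image_orderEmbOfFin_univ σ.1 σ.2]
    exact (prod_image fun a _ b _ hab => (σ.1.orderEmbOfFin σ.2).injective hab).symm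
  · rw [diagonal_apply_ne _ hστ]
    obtain ⟨s, hsσ, hsτ⟩ := not_subset.mp fun hsub =>
      hστ (Subtype.ext (eq_of_subset_of_card_le hsub (by rw [σ.2, τ.2])))
    rw [← image_orderEmbOfFin_univ σ.1 σ.2] at hsσ
    obtain ⟨i, -, rfl⟩ := mem_image.mp hsσ
    refine det_eq_zero_of_row_eq_zero i fun l => diagonal_apply_ne _ fun h => hsτ ?_
    exact h ▸ orderEmbOfFin_mem τ.1 τ.2 l

theorem compound_one (j : ℕ) : compound j (1 : Matrix (Fin k) (Fin k) ℝ) = 1 := by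
  rw [← diagonal_one, compound_diagonal]
  simp

noncomputable def compoundMonoidHom (k j : ℕ) :
    Matrix (Fin k) (Fin k) ℝ →*
      Matrix {s : Finset (Fin k) // s.card = j} {s : Finset (Fin k) // s.card = j} ℝ where
  toFun := compound j
  map_one' := compound_one j
  map_mul' := compound_mul j

theorem spectrum_compound_units_conj (u : (Matrix (Fin k) (Fin k) ℝ)ˣ)
    (D : Matrix (Fin k) (Fin k) ℝ) (j : ℕ) :
    spectrum ℝ (compound j (u.val * D * u⁻¹.val)) = spectrum ℝ (compound j D) := by
  rw [compound_mul, compound_mul]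
  exact spectrum.units_conjugate (u := Units.map (compoundMonoidHom k j) u)

theorem Matrix.IsHermitian.spectrum_compound {M : Matrix (Fin k) (Fin k) ℝ}
    (hM : M.IsHermitian) (j : ℕ) :
    spectrum ℝ (compound j M) =
      Set.range fun S : {s : Finset (Fin k) // s.card = j} => ∏ i ∈ S.1, hM.eigenvalues i := by
  set u := Unitary.toUnits hM.eigenvectorUnitary
  have hdiag : M = u.val * diagonal hM.eigenvalues * u⁻¹.val := by
    conv_lhs => rw [hM.spectral_theorem]
    simp [u]
  rw [congrArg (fun A => spectrum ℝ (compound j A)) hdiag, spectrum_compound_units_conj,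
    compound_diagonal, spectrum_diagonal]

theorem Matrix.IsHermitian.exists_isEigenvalue_compound_mul_eq_det {j : ℕ}
    {M : Matrix (Fin k) (Fin k) ℝ} (hM : M.IsHermitian) {lam : ℝ}
    (hlam : IsEigenvalue (compound j M) lam) :
    ∃ mu : ℝ, IsEigenvalue (compound (k - j) M) mu ∧ lam * mu = M.det := by
  rw [isEigenvalue_iff_mem_spectrum, hM.spectrum_compound] at hlam
  obtain ⟨S, rfl⟩ := hlam
  refine ⟨∏ i ∈ S.1ᶜ, hM.eigenvalues i, ?_, ?_⟩
  · rw [isEigenvalue_iff_mem_spectrum, hM.spectrum_compound]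
    exact ⟨⟨S.1ᶜ, by rw [card_compl, S.2, Fintype.card_fin]⟩, rfl⟩
  · rw [prod_mul_prod_compl, hM.det_eq_prod_eigenvalues]
    simp

end Compound

theorem compound_eigenvalue_pairing_general {N L k j : ℕ}
    (V : Matrix (Fin N) (Fin k) ℝ) (W : Matrix (Fin N) (Fin (L - k)) ℝ)
    (hVW : V * Vᵀ + W * Wᵀ = 1) :
    ∀ lam : ℝ, IsEigenvalue (compound j (Vᵀ * (W * Wᵀ)⁻¹ * V)) lam →
      ∃ mu : ℝ, IsEigenvalue (compound (k - j) (Vᵀ * (W * Wᵀ)⁻¹ * V)) mu ∧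
        lam * mu = (Vᵀ * V).det / (W * Wᵀ).det := by
  intro lam hlam
  have hM : (Vᵀ * (W * Wᵀ)⁻¹ * V).IsHermitian := by
    simpa [conjTranspose_eq_transpose_of_trivial] using
      isHermitian_conjTranspose_mul_mul V (isHermitian_mul_conjTranspose_self W).inv
  obtain ⟨mu, hmu, hdet⟩ := hM.exists_isEigenvalue_compound_mul_eq_det hlam
  refine ⟨mu, hmu, ?_⟩
  rw [hdet, eq_sub_of_add_eq' hVW, det_mul_inv_one_sub_mul_mul]

theorem compound_eigenvalue_pairing {N L k j : ℕ} (hjk : j ≤ k) (hkN : k ≤ N) (hkLk : k ≤ L - k)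
    (V : Matrix (Fin N) (Fin k) ℝ) (W : Matrix (Fin N) (Fin (L - k)) ℝ)
    (hVW : V * Vᵀ + W * Wᵀ = 1)
    (hV : V.rank = min N k) (hW : W.rank = min N (L - k)) :
    ∀ lam : ℝ, IsEigenvalue (compound j (Vᵀ * (W * Wᵀ)⁻¹ * V)) lam →
      ∃ mu : ℝ, IsEigenvalue (compound (k - j) (Vᵀ * (W * Wᵀ)⁻¹ * V)) mu ∧
        lam * mu = (Vᵀ * V).det / (W * Wᵀ).det :=
  compound_eigenvalue_pairing_general V W hVW
end

section
/- Let U ∈ ℝ^{N×L} with U Uᵀ = Id_N and columns u_1,...,u_L. For consecutive indices j = i+1, the off-diagonal entry of the two-orbital reduced density matrix of the associated Slater determinant equals ⟨u_i, u_j⟩; formally, Σ over (N−1)-subsets α of {1,...,L}\{i,i+1} of det(u_{α,<i}, u_i, u_{α,>i}) · det(u_{α,<i+1}, u_{i+1}, u_{α,>i+1}) = ⟨u_i, u_{i+1}⟩, where determinant columns are arranged in increasing index order. -/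
open Matrix

open Matrix Finset Equiv

variable {N L : ℕ}

lemma image_orderEmb_perm (I : Finset (Fin L)) (h : I.card = N) (σ : Equiv.Perm (Fin N)) :
    Finset.image (fun k => I.orderEmbOfFin h (σ k)) Finset.univ = I := by
  apply Finset.eq_of_subset_of_card_le
  · intro x hx
    obtain ⟨k, -, rfl⟩ := Finset.mem_image.mp hx
    exact Finset.orderEmbOfFin_mem I h (σ k)
  · rw [Finset.card_image_of_injective _
      (fun a b hab => σ.injective ((I.orderEmbOfFin h).injective hab))]
    simp [h]

lemma cauchyBinet (A : Matrix (Fin N) (Fin L) ℝ) (B : Matrix (Fin L) (Fin N) ℝ) :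
    (A * B).det = ∑ I : {s : Finset (Fin L) // s.card = N},
      (A.submatrix id (I.1.orderEmbOfFin I.2)).det *
      (B.submatrix (I.1.orderEmbOfFin I.2) id).det := by
  classical
  have step1 : (A * B).det = ∑ p : Fin N → Fin L,
      (∏ x, B (p x) x) * (A.submatrix id p).det := by
    calc (A * B).det
        = ∑ p : Fin N → Fin L, ∑ σ : Perm (Fin N),
            ((Perm.sign σ : ℤ) : ℝ) * ∏ x, A (σ x) (p x) * B (p x) x := by
          simp only [det_apply', mul_apply, Finset.prod_univ_sum, Finset.mul_sum,
            Fintype.piFinset_univ]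
          rw [Finset.sum_comm]
      _ = ∑ p : Fin N → Fin L,
            (∏ x, B (p x) x) * (A.submatrix id p).det := by
          refine Finset.sum_congr rfl fun p _ => ?_
          rw [det_apply', Finset.mul_sum]
          refine Finset.sum_congr rfl fun σ _ => ?_
          simp only [submatrix_apply, id_eq]
          rw [Finset.prod_mul_distrib]
          ring
  rw [step1]
  have hzero : ∀ p : Fin N → Fin L, ¬ Function.Injective p →
      (A.submatrix id p).det = 0 := by
    intro p hp
    rw [Function.not_injective_iff] at hp
    obtain ⟨a, b, hab, hne⟩ := hp
    rw [← det_transpose]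
    exact det_zero_of_row_eq hne (by funext r; simp [hab])
  rw [← Finset.sum_filter_of_ne (p := fun p : Fin N → Fin L => Function.Injective p)
    (fun p _ hne => by
      by_contra hinj
      exact hne (by rw [hzero p hinj, mul_zero]))]
  have key : ∀ I : {s : Finset (Fin L) // s.card = N},
      (A.submatrix id (I.1.orderEmbOfFin I.2)).det *
      (B.submatrix (I.1.orderEmbOfFin I.2) id).det
      = ∑ σ : Perm (Fin N), (∏ x, B (I.1.orderEmbOfFin I.2 (σ x)) x) *
          (A.submatrix id (fun k => I.1.orderEmbOfFin I.2 (σ k))).det := by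
    intro I
    have hsub : ∀ σ : Perm (Fin N),
        (A.submatrix id (fun k => I.1.orderEmbOfFin I.2 (σ k))).det
        = ((Perm.sign σ : ℤ) : ℝ) * (A.submatrix id (I.1.orderEmbOfFin I.2)).det := by
      intro σ
      have : A.submatrix id (fun k => I.1.orderEmbOfFin I.2 (σ k))
          = (A.submatrix id (I.1.orderEmbOfFin I.2)).submatrix id σ := rfl
      rw [this, det_permute']
    simp only [hsub]
    rw [det_apply' (B.submatrix (I.1.orderEmbOfFin I.2) id), Finset.mul_sum]
    refine Finset.sum_congr rfl fun σ _ => ?_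
    simp only [submatrix_apply, id_eq]
    ring
  calc ∑ p ∈ filter (fun p : Fin N → Fin L => Function.Injective p) univ,
        (∏ x, B (p x) x) * (A.submatrix id p).det
      = ∑ q : {s : Finset (Fin L) // s.card = N} × Perm (Fin N),
        (∏ x, B (q.1.1.orderEmbOfFin q.1.2 (q.2 x)) x) *
          (A.submatrix id (fun k => q.1.1.orderEmbOfFin q.1.2 (q.2 k))).det := by
        refine (Finset.sum_nbij
          (fun q : {s : Finset (Fin L) // s.card = N} × Perm (Fin N) =>
            (fun k => q.1.1.orderEmbOfFin q.1.2 (q.2 k)))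
          ?_ ?_ ?_ ?_).symm
        · intro q _
          simp only [Finset.mem_filter, Finset.mem_univ, true_and]
          exact fun a b hab => q.2.injective ((q.1.1.orderEmbOfFin q.1.2).injective hab)
        · rintro ⟨⟨s, hs⟩, σ⟩ - ⟨⟨s', hs'⟩, σ'⟩ - hqq
          dsimp only at hqq
          have himg : s = s' := by
            rw [← image_orderEmb_perm s hs σ, ← image_orderEmb_perm s' hs' σ', hqq]
          subst himg
          have hσ : σ = σ' := by
            ext k
            have := congrFun hqq k
            exact Fin.val_congr ((s.orderEmbOfFin hs).injective this)
          rw [hσ]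
        · intro p hp
          simp only [Finset.coe_filter, Set.mem_setOf_eq, Finset.mem_univ, true_and] at hp
          have hpinj : Function.Injective p := hp
          have hcard : (Finset.image p Finset.univ).card = N := by
            rw [Finset.card_image_of_injective _ hpinj]; simp
          set I : Finset (Fin L) := Finset.image p Finset.univ with hI
          have hmem : ∀ k, p k ∈ I := fun k => Finset.mem_image_of_mem p (Finset.mem_univ k)
          have hbij : Function.Bijective
              (fun k => (I.orderIsoOfFin hcard).symm ⟨p k, hmem k⟩) := by
            rw [← Finite.injective_iff_bijective]
            intro a b hab
            have := (I.orderIsoOfFin hcard).symm.injective hab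
            exact hpinj (Subtype.ext_iff.mp this)
          refine ⟨⟨⟨I, hcard⟩, Equiv.ofBijective _ hbij⟩, Finset.mem_coe.mpr (Finset.mem_univ _), ?_⟩
          funext k
          show I.orderEmbOfFin hcard ((I.orderIsoOfFin hcard).symm ⟨p k, hmem k⟩) = p k
          rw [← Finset.coe_orderIsoOfFin_apply, OrderIso.apply_symm_apply]
        · intro q _
          rfl
    _ = ∑ I : {s : Finset (Fin L) // s.card = N},
        (A.submatrix id (I.1.orderEmbOfFin I.2)).det *
        (B.submatrix (I.1.orderEmbOfFin I.2) id).det := by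
        rw [Fintype.sum_prod_type]
        refine Finset.sum_congr rfl fun I _ => ?_
        exact (key I).symm

section CB

variable {N L : ℕ}

noncomputable def Wmat (U : Matrix (Fin N) (Fin L) ℝ) (i j : Fin L) :
    Matrix (Fin N) (Fin L) ℝ :=
  fun r p => if p = i then U r j else if p = j then 0 else U r p

noncomputable def Vmat (U : Matrix (Fin N) (Fin L) ℝ) (i j : Fin L) :
    Matrix (Fin N) (Fin L) ℝ :=
  fun r p => if p = i then 0 else if p = j then 0 else U r p

variable (U : Matrix (Fin N) (Fin L) ℝ) (i j : Fin L)

-- the sorted embedding of (s.erase i) ∪ {j}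
lemma emb_swap {s : Finset (Fin L)} (hs : s.card = N) (hj : j.val = i.val + 1)
    (hi : i ∈ s) (hjs : j ∉ s) (h' : ((s.erase i) ∪ {j}).card = N) :
    ⇑(((s.erase i) ∪ {j}).orderEmbOfFin h') =
      fun k => if s.orderEmbOfFin hs k = i then j else s.orderEmbOfFin hs k := by
  set e := s.orderEmbOfFin hs with he
  have hmem : ∀ k, e k ∈ s := fun k => Finset.orderEmbOfFin_mem s hs k
  have hne_j : ∀ k, e k ≠ j := fun k h => hjs (h ▸ hmem k)
  refine (Finset.orderEmbOfFin_unique h' ?_ ?_).symm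
  · intro x
    by_cases hx : e x = i
    · simp [hx]
    · simp only [hx, if_neg]
      exact Finset.mem_union_left _ (Finset.mem_erase.mpr ⟨hx, hmem x⟩)
  · intro k l hkl
    have h1 : e k < e l := (s.orderEmbOfFin hs).strictMono hkl
    have h1' : (e k).val < (e l).val := h1
    have hnjk : (e k).val ≠ j.val := fun h => hne_j k (Fin.ext h)
    have hnjl : (e l).val ≠ j.val := fun h => hne_j l (Fin.ext h)
    by_cases hk : e k = i <;> by_cases hl : e l = i <;>
      simp only [hk, hl, if_pos, if_neg, if_true, if_false] <;>
      rw [Fin.lt_def]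
    · exact absurd (hk.trans hl.symm ▸ h1'.ne) (by simp [hk, hl])
    · have : (e k).val = i.val := congrArg Fin.val hk
      omega
    · have : (e l).val = i.val := congrArg Fin.val hl
      omega
    · exact h1'

lemma detV_zero {s : Finset (Fin L)} (hs : s.card = N) (hi : i ∈ s) :
    ((Vmat U i j).submatrix id (s.orderEmbOfFin hs)).det = 0 := by
  have : i ∈ Set.range (s.orderEmbOfFin hs) := by
    rw [Finset.range_orderEmbOfFin]; exact hi
  obtain ⟨k₀, hk₀⟩ := this
  exact det_eq_zero_of_column_eq_zero k₀ (fun r => by simp [Vmat, hk₀])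

lemma detWV_zero_of_j_mem (hij : j ≠ i) {s : Finset (Fin L)} (hs : s.card = N) (hjs : j ∈ s) :
    ((Wmat U i j).submatrix id (s.orderEmbOfFin hs)).det = 0 ∧
    ((Vmat U i j).submatrix id (s.orderEmbOfFin hs)).det = 0 := by
  have : j ∈ Set.range (s.orderEmbOfFin hs) := by
    rw [Finset.range_orderEmbOfFin]; exact hjs
  obtain ⟨k₀, hk₀⟩ := this
  constructor
  · exact det_eq_zero_of_column_eq_zero k₀ (fun r => by simp [Wmat, hk₀, hij])
  · exact det_eq_zero_of_column_eq_zero k₀ (fun r => by simp [Vmat, hk₀, hij])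

lemma detWV_eq_of_not_mem {s : Finset (Fin L)} (hs : s.card = N) (his : i ∉ s) (hjs : j ∉ s) :
    (Wmat U i j).submatrix id (s.orderEmbOfFin hs) =
    (Vmat U i j).submatrix id (s.orderEmbOfFin hs) := by
  ext r k
  have hmem : s.orderEmbOfFin hs k ∈ s := Finset.orderEmbOfFin_mem s hs k
  have h1 : s.orderEmbOfFin hs k ≠ i := fun h => his (h ▸ hmem)
  have h2 : s.orderEmbOfFin hs k ≠ j := fun h => hjs (h ▸ hmem)
  simp [Wmat, Vmat, h1, h2]

lemma detW_eq (hj : j.val = i.val + 1) {s : Finset (Fin L)} (hs : s.card = N)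
    (hi : i ∈ s) (hjs : j ∉ s) (h' : ((s.erase i) ∪ {j}).card = N) :
    ((Wmat U i j).submatrix id (s.orderEmbOfFin hs)).det =
    (U.submatrix id (((s.erase i) ∪ {j}).orderEmbOfFin h')).det := by
  have h1 : (Wmat U i j).submatrix id (s.orderEmbOfFin hs) = U.submatrix id
      (fun k => if s.orderEmbOfFin hs k = i then j else s.orderEmbOfFin hs k) := by
    ext r k
    have hmem : s.orderEmbOfFin hs k ∈ s := Finset.orderEmbOfFin_mem s hs k
    have h2 : s.orderEmbOfFin hs k ≠ j := fun h => hjs (h ▸ hmem)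
    by_cases hk : s.orderEmbOfFin hs k = i <;> simp [Wmat, hk, h2]
  rw [h1, ← emb_swap i j hs hj hi hjs h']


lemma detdiff (U : Matrix (Fin N) (Fin L) ℝ) (hU : U * Uᵀ = 1) (i j : Fin L) (hij : i ≠ j) :
    (U * (Wmat U i j)ᵀ).det - (U * (Vmat U i j)ᵀ).det = ∑ r, U r i * U r j := by
  have hU' : ∀ r s, (∑ p, U r p * U s p) = if r = s then (1:ℝ) else 0 := by
    intro r s
    have := congrFun (congrFun hU r) s
    simpa [mul_apply, one_apply, transpose_apply] using this
  set A2 : Matrix (Fin N) (Fin 2) ℝ := Matrix.of fun r k => if k = 0 then U r i else U r j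
    with hA2
  set Bw : Matrix (Fin 2) (Fin N) ℝ :=
    Matrix.of fun k s => if k = 0 then U s j - U s i else -(U s j) with hBw
  set Bv : Matrix (Fin 2) (Fin N) ℝ :=
    Matrix.of fun k s => if k = 0 then -(U s i) else -(U s j) with hBv
  have split : ∀ r s (x y : ℝ),
      (∑ p, U r p * (if p = i then x else if p = j then y else U s p))
      = (∑ p, U r p * U s p) + (U r i * (x - U s i) + U r j * (y - U s j)) := by
    intro r s x y
    have hsum : ∀ p, U r p * (if p = i then x else if p = j then y else U s p)
        = U r p * U s p + ((if p = i then U r i * (x - U s i) else 0)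
          + (if p = j then U r j * (y - U s j) else 0)) := by
      intro p
      by_cases hp : p = i
      · subst hp
        rw [if_pos rfl, if_pos rfl, if_neg hij]
        ring
      · by_cases hq : p = j
        · subst hq
          rw [if_neg hp, if_neg hp, if_pos rfl, if_pos rfl]
          ring
        · simp [hp, hq]
    rw [Finset.sum_congr rfl (fun p _ => hsum p), Finset.sum_add_distrib,
      Finset.sum_add_distrib, Finset.sum_ite_eq' Finset.univ i,
      Finset.sum_ite_eq' Finset.univ j]
    simp
  have hW : U * (Wmat U i j)ᵀ = 1 + A2 * Bw := by
    ext r s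
    simp only [mul_apply, Matrix.add_apply, one_apply, transpose_apply, of_apply, Wmat, hA2, hBw]
    rw [split r s (U s j) 0, hU' r s, Fin.sum_univ_two]
    simp only [of_apply]
    norm_num
  have hV : U * (Vmat U i j)ᵀ = 1 + A2 * Bv := by
    ext r s
    simp only [mul_apply, Matrix.add_apply, one_apply, transpose_apply, of_apply, Vmat, hA2, hBv]
    rw [split r s 0 0, hU' r s, Fin.sum_univ_two]
    simp only [of_apply]
    norm_num
  rw [hW, hV, det_one_add_mul_comm A2 Bw, det_one_add_mul_comm A2 Bv, det_fin_two, det_fin_two]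
  simp only [hA2, hBw, hBv, Matrix.add_apply, one_apply, mul_apply, of_apply]
  norm_num
  have hc : (∑ s, U s j * U s i) = ∑ s, U s i * U s j :=
    Finset.sum_congr rfl fun s _ => mul_comm _ _
  simp only [sub_mul, mul_sub, neg_mul, mul_neg, Finset.sum_sub_distrib,
    Finset.sum_neg_distrib, hc]
  ring

end CB

lemma finsetUnionSingleton {α : Type*} [DecidableEq α] (s : Finset α) (a : α) :
    s ∪ {a} = insert a s := by rw [Finset.union_comm, ← Finset.insert_eq]

theorem offdiag_rdm_consecutive {N L : ℕ} (hN : 1 ≤ N)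
    (U : Matrix (Fin N) (Fin L) ℝ) (hU : U * Uᵀ = 1)
    (i j : Fin L) (hj : j.val = i.val + 1) :
    ∑ α ∈ ((Finset.univ \ {i, j} : Finset (Fin L)).powersetCard (N - 1)).attach,
      (U.submatrix id ((α.1 ∪ {i}).orderEmbOfFin (by
        obtain ⟨hsub, hcard⟩ := Finset.mem_powersetCard.mp α.2
        have hiα : i ∉ α.1 := fun h => by have h2 := hsub h; simp at h2
        rw [Finset.card_union_of_disjoint (Finset.disjoint_singleton_right.mpr hiα),
          hcard, Finset.card_singleton]
        omega))).det *
      (U.submatrix id ((α.1 ∪ {j}).orderEmbOfFin (by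
        obtain ⟨hsub, hcard⟩ := Finset.mem_powersetCard.mp α.2
        have hjα : j ∉ α.1 := fun h => by have h2 := hsub h; simp at h2
        rw [Finset.card_union_of_disjoint (Finset.disjoint_singleton_right.mpr hjα),
          hcard, Finset.card_singleton]
        omega))).det
    = ∑ r, U r i * U r j := by
  classical
  have hij : i ≠ j := fun h => by rw [h] at hj; omega
  set F : {s : Finset (Fin L) // s.card = N} → ℝ := fun I =>
    (U.submatrix id (I.1.orderEmbOfFin I.2)).det *
      (((Wmat U i j).submatrix id (I.1.orderEmbOfFin I.2)).det -
       ((Vmat U i j).submatrix id (I.1.orderEmbOfFin I.2)).det) with hF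
  have key : ∑ I : {s : Finset (Fin L) // s.card = N}, F I = ∑ r, U r i * U r j := by
    have hW : (U * (Wmat U i j)ᵀ).det
        = ∑ I : {s : Finset (Fin L) // s.card = N},
            (U.submatrix id (I.1.orderEmbOfFin I.2)).det *
            ((Wmat U i j).submatrix id (I.1.orderEmbOfFin I.2)).det := by
      rw [cauchyBinet U (Wmat U i j)ᵀ]
      refine Finset.sum_congr rfl fun I _ => ?_
      rw [← det_transpose ((Wmat U i j).submatrix id (I.1.orderEmbOfFin I.2))]
      rfl
    have hV : (U * (Vmat U i j)ᵀ).det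
        = ∑ I : {s : Finset (Fin L) // s.card = N},
            (U.submatrix id (I.1.orderEmbOfFin I.2)).det *
            ((Vmat U i j).submatrix id (I.1.orderEmbOfFin I.2)).det := by
      rw [cauchyBinet U (Vmat U i j)ᵀ]
      refine Finset.sum_congr rfl fun I _ => ?_
      rw [← det_transpose ((Vmat U i j).submatrix id (I.1.orderEmbOfFin I.2))]
      rfl
    simp only [hF, mul_sub, Finset.sum_sub_distrib]
    rw [← hW, ← hV]
    exact detdiff U hU i j hij
  have vanish : ∀ I : {s : Finset (Fin L) // s.card = N},
      ¬(i ∈ I.1 ∧ j ∉ I.1) → F I = 0 := by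
    intro I hI
    by_cases hjI : j ∈ I.1
    · obtain ⟨h1, h2⟩ := detWV_zero_of_j_mem U i j hij.symm I.2 hjI
      simp [hF, h1, h2]
    · have hiI : i ∉ I.1 := fun h => hI ⟨h, hjI⟩
      simp only [hF]
      rw [detWV_eq_of_not_mem U i j I.2 hiI hjI]
      simp
  rw [← key, ← Finset.sum_filter_of_ne
    (p := fun I : {s : Finset (Fin L) // s.card = N} => i ∈ I.1 ∧ j ∉ I.1)
    (fun I _ hne => by by_contra h; exact hne (vanish I h))]
  have hia : ∀ a : {x // x ∈ ((Finset.univ \ {i, j} : Finset (Fin L)).powersetCard (N - 1))},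
      i ∉ a.1 := fun a h => by
    have := (Finset.mem_powersetCard.mp a.2).1 h; simp at this
  have hja : ∀ a : {x // x ∈ ((Finset.univ \ {i, j} : Finset (Fin L)).powersetCard (N - 1))},
      j ∉ a.1 := fun a h => by
    have := (Finset.mem_powersetCard.mp a.2).1 h; simp at this
  have hcard : ∀ a : {x // x ∈ ((Finset.univ \ {i, j} : Finset (Fin L)).powersetCard (N - 1))},
      (a.1 ∪ {i}).card = N := by
    intro a
    rw [finsetUnionSingleton _ _, Finset.card_insert_of_notMem (hia a),
      (Finset.mem_powersetCard.mp a.2).2]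
    omega
  have hcardj : ∀ a : {x // x ∈ ((Finset.univ \ {i, j} : Finset (Fin L)).powersetCard (N - 1))},
      (a.1 ∪ {j}).card = N := by
    intro a
    rw [finsetUnionSingleton _ _, Finset.card_insert_of_notMem (hja a),
      (Finset.mem_powersetCard.mp a.2).2]
    omega
  have detcongr : ∀ (M : Matrix (Fin N) (Fin L) ℝ) (s t : Finset (Fin L)) (h : s = t)
      (hs : s.card = N) (ht : t.card = N),
      (M.submatrix id (s.orderEmbOfFin hs)).det = (M.submatrix id (t.orderEmbOfFin ht)).det := by
    intro M s t h hs ht; subst h; rfl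
  refine Finset.sum_bij'
    (fun a _ => (⟨a.1 ∪ {i}, hcard a⟩ : {s : Finset (Fin L) // s.card = N}))
    (fun I hI => ⟨I.1.erase i, ?_⟩) ?_ (fun I hI => Finset.mem_attach _ _) ?_ ?_ ?_
  · refine Finset.mem_powersetCard.mpr ⟨?_, ?_⟩
    · intro x hx
      obtain ⟨hx1, hx2⟩ := Finset.mem_erase.mp hx
      have hjI : j ∉ I.1 := ((Finset.mem_filter.mp hI).2).2
      simp only [Finset.mem_sdiff, Finset.mem_univ, true_and, Finset.mem_insert,
        Finset.mem_singleton]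
      push_neg
      exact ⟨hx1, fun h => hjI (h ▸ hx2)⟩
    · rw [Finset.card_erase_of_mem ((Finset.mem_filter.mp hI).2).1, I.2]
  · intro a _
    refine Finset.mem_filter.mpr ⟨Finset.mem_univ _, ?_, ?_⟩
    · simp
    · simp only [Finset.mem_union, Finset.mem_singleton]
      push_neg
      exact ⟨hja a, hij.symm⟩
  · intro a _
    exact Subtype.ext (by
      simp only
      rw [finsetUnionSingleton _ _, Finset.erase_insert (hia a)])
  · intro I hI
    exact Subtype.ext (by
      simp only
      rw [finsetUnionSingleton _ _, Finset.insert_erase ((Finset.mem_filter.mp hI).2).1])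
  · intro a _
    have hiI : i ∈ a.1 ∪ {i} := by simp
    have hjI : j ∉ a.1 ∪ {i} := by
      simp only [Finset.mem_union, Finset.mem_singleton]
      push_neg
      exact ⟨hja a, hij.symm⟩
    have hset : ((a.1 ∪ {i}).erase i) ∪ {j} = a.1 ∪ {j} := by
      rw [finsetUnionSingleton a.1 i, Finset.erase_insert (hia a)]
    have h' : (((a.1 ∪ {i}).erase i) ∪ {j}).card = N := by rw [hset]; exact hcardj a
    simp only [hF]
    rw [detV_zero U i j (hcard a) hiI, sub_zero, detW_eq U i j hj (hcard a) hiI hjI h']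
    exact congrArg₂ (· * ·) rfl (detcongr U _ _ hset.symm (hcardj a) h')
end

section
/- Bond dimension bound: Let U ∈ ℝ^{N×L} with U Uᵀ = Id_N and columns u_1,...,u_L. Define Ψ ∈ ℝ^{2^k × 2^{L−k}} by Ψ_{(μ_1..μ_k),(μ_{k+1}..μ_L)} = det(u_{i_1} ⋯ u_{i_N}) if Σ μ_i = N with 1's at positions i_1 < ... < i_N, and 0 otherwise. Then for every 1 ≤ k ≤ L−1, rank(Ψ) ≤ 2^N. -/
open Matrix

open Matrix ExteriorAlgebra

namespace SlaterAux

variable {N L : ℕ}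

/-- coordinate basis vectors of ℝ^N -/
noncomputable def eV (N : ℕ) (i : Fin N) : Fin N → ℝ := Pi.single i 1

/-- monomial in the exterior algebra indexed by a list -/
noncomputable def mlE (N : ℕ) (l : List (Fin N)) : ExteriorAlgebra ℝ (Fin N → ℝ) :=
  (l.map fun i => ι ℝ (eV N i)).prod

lemma mlE_nil : mlE N [] = 1 := rfl

lemma mlE_cons (j : Fin N) (l : List (Fin N)) :
    mlE N (j :: l) = ι ℝ (eV N j) * mlE N l := by
  simp [mlE]

/-- key anticommutation lemma -/
lemma key (i : Fin N) : ∀ l : List (Fin N), l.Pairwise (· < ·) →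
    ∃ (c : ℝ) (l' : List (Fin N)), l'.Pairwise (· < ·) ∧ (∀ x ∈ l', x = i ∨ x ∈ l) ∧
      ι ℝ (eV N i) * mlE N l = c • mlE N l' := by
  intro l
  induction l with
  | nil =>
    intro _
    exact ⟨1, [i], List.pairwise_singleton _ i, by simp, by simp [mlE_nil, mlE_cons]⟩
  | cons j t ih =>
    intro hs
    rw [List.pairwise_cons] at hs
    obtain ⟨hjt, hts⟩ := hs
    rcases lt_trichotomy i j with hij | hij | hij
    · refine ⟨1, i :: j :: t, ?_, ?_, by simp [mlE_cons]⟩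
      · rw [List.pairwise_cons]
        refine ⟨?_, List.pairwise_cons.2 ⟨hjt, hts⟩⟩
        intro b hb
        rcases List.mem_cons.1 hb with rfl | hb
        · exact hij
        · exact hij.trans (hjt b hb)
      · intro x hx
        rcases List.mem_cons.1 hx with rfl | hx
        · exact Or.inl rfl
        · exact Or.inr hx
    · subst hij
      refine ⟨0, [], List.Pairwise.nil, by simp, ?_⟩
      rw [mlE_cons, ← mul_assoc, ι_sq_zero, zero_mul, zero_smul]
    · obtain ⟨c, l', hl's, hl'mem, hl'⟩ := ih hts
      refine ⟨-c, j :: l', ?_, ?_, ?_⟩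
      · rw [List.pairwise_cons]
        refine ⟨?_, hl's⟩
        intro b hb
        rcases hl'mem b hb with rfl | hb
        · exact hij
        · exact hjt b hb
      · intro x hx
        rcases List.mem_cons.1 hx with rfl | hx
        · exact Or.inr List.mem_cons_self
        · rcases hl'mem x hx with rfl | hx
          · exact Or.inl rfl
          · exact Or.inr (List.mem_cons_of_mem _ hx)
      · have swap : ι ℝ (eV N i) * ι ℝ (eV N j) = -(ι ℝ (eV N j) * ι ℝ (eV N i)) := by
          have := ι_add_mul_swap (R := ℝ) (eV N i) (eV N j)
          linear_combination (norm := noncomm_ring) this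
        rw [mlE_cons, ← mul_assoc, swap, neg_mul, mul_assoc, hl', mlE_cons,
          mul_smul_comm, neg_smul]

/-- the span of the ordered basis monomials -/
noncomputable def Wspan (N : ℕ) : Submodule ℝ (ExteriorAlgebra ℝ (Fin N → ℝ)) :=
  Submodule.span ℝ (Set.range fun s : Finset (Fin N) => mlE N (s.sort (· ≤ ·)))

lemma mlE_sorted_mem (l : List (Fin N)) (hl : l.Pairwise (· < ·)) : mlE N l ∈ Wspan N := by
  have hnd : l.Nodup := hl.nodup
  have : (l.toFinset.sort (· ≤ ·)) = l := (List.toFinset_sort (· ≤ ·) hnd).2 (hl.imp le_of_lt)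
  exact Submodule.subset_span ⟨l.toFinset, by simp only [this]⟩

lemma ι_mul_mem (v : Fin N → ℝ) (x : ExteriorAlgebra ℝ (Fin N → ℝ)) (hx : x ∈ Wspan N) :
    ι ℝ v * x ∈ Wspan N := by
  induction hx using Submodule.span_induction with
  | mem y hy =>
    obtain ⟨s, rfl⟩ := hy
    have hv : v = ∑ i, v i • eV N i := by
      ext j
      simp [eV, Pi.single_apply]
    rw [hv, map_sum]
    simp_rw [_root_.map_smul]
    rw [Finset.sum_mul]
    refine Submodule.sum_mem _ fun i _ => ?_
    rw [smul_mul_assoc]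
    obtain ⟨c, l', hl's, _, hl'⟩ := key i (s.sort (· ≤ ·)) ((Finset.sortedLT_sort s).pairwise)
    rw [hl']
    exact Submodule.smul_mem _ _ (Submodule.smul_mem _ _ (mlE_sorted_mem l' hl's))
  | zero => rw [mul_zero]; exact Submodule.zero_mem _
  | add y z _ _ hy hz => rw [mul_add]; exact Submodule.add_mem _ hy hz
  | smul c y _ hy => rw [mul_smul_comm]; exact Submodule.smul_mem _ _ hy

lemma prod_mem (l : List (Fin N → ℝ)) : (l.map fun v => ι ℝ v).prod ∈ Wspan N := by
  induction l with
  | nil =>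
    simpa [mlE_nil] using mlE_sorted_mem ([] : List (Fin N)) List.Pairwise.nil
  | cons v t ih =>
    rw [List.map_cons, List.prod_cons]
    exact ι_mul_mem v _ ih

/-- the alternating family: det in degree N, zero elsewhere -/
noncomputable def detFam (N : ℕ) : ∀ i : ℕ, (Fin N → ℝ) [⋀^Fin i]→ₗ[ℝ] ℝ :=
  fun i => if h : i = N then h ▸ (Pi.basisFun ℝ (Fin N)).det else 0

noncomputable def lamE (N : ℕ) : ExteriorAlgebra ℝ (Fin N → ℝ) →ₗ[ℝ] ℝ :=
  liftAlternating (detFam N)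

lemma lamE_ιMulti (n : ℕ) (v : Fin n → (Fin N → ℝ)) :
    lamE N (ιMulti ℝ n v) =
      if h : n = N then (Pi.basisFun ℝ (Fin N)).det (fun j => v (Fin.cast h.symm j)) else 0 := by
  rw [lamE, liftAlternating_apply_ιMulti, detFam]
  by_cases h : n = N
  · subst h
    simp
  · simp [h]

/-- column of U -/
def uCol (U : Matrix (Fin N) (Fin L) ℝ) (p : Fin L) : Fin N → ℝ := fun i => U i p

noncomputable def prodU (U : Matrix (Fin N) (Fin L) ℝ) (l : List (Fin L)) :
    ExteriorAlgebra ℝ (Fin N → ℝ) :=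
  (l.map fun p => ι ℝ (uCol U p)).prod

lemma prodU_mem (U : Matrix (Fin N) (Fin L) ℝ) (l : List (Fin L)) :
    prodU U l ∈ Wspan N := by
  have h := prod_mem (N := N) (l.map (uCol U))
  rw [List.map_map] at h
  exact h

lemma prodU_eq_ιMulti (U : Matrix (Fin N) (Fin L) ℝ) (l : List (Fin L)) :
    prodU U l = ιMulti ℝ l.length (fun i : Fin l.length => uCol U l[(i : ℕ)]) := by
  rw [ιMulti_apply, prodU]
  conv_lhs => rw [← List.ofFn_getElem (xs := l), List.map_ofFn]
  rfl

lemma lamE_prodU_sort (U : Matrix (Fin N) (Fin L) ℝ) (S : Finset (Fin L)) :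
    lamE N (prodU U (S.sort (· ≤ ·))) =
      if h : S.card = N then (U.submatrix id (S.orderEmbOfFin h)).det else 0 := by
  rw [prodU_eq_ιMulti, lamE_ιMulti]
  have hlen : (S.sort (· ≤ ·)).length = S.card := Finset.length_sort _
  by_cases h : S.card = N
  · rw [dif_pos (hlen.trans h), dif_pos h]
    rw [Module.Basis.det_apply]
    congr 1
  · rw [dif_neg (fun hc => h (hlen.symm.trans hc)), dif_neg h]

lemma slaterEntry_eq (U : Matrix (Fin N) (Fin L) ℝ) (o : Fin L → Bool) :
    slaterEntry U o = lamE N (prodU U ((Finset.univ.filter fun p => o p = true).sort (· ≤ ·))) := by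
  rw [lamE_prodU_sort, slaterEntry]

lemma prodU_append (U : Matrix (Fin N) (Fin L) ℝ) (l₁ l₂ : List (Fin L)) :
    prodU U (l₁ ++ l₂) = prodU U l₁ * prodU U l₂ := by
  rw [prodU, prodU, prodU, List.map_append, List.prod_append]

lemma sort_union_of_lt {s t : Finset (Fin L)} (h : ∀ x ∈ s, ∀ y ∈ t, x < y) :
    (s ∪ t).sort (· ≤ ·) = s.sort (· ≤ ·) ++ t.sort (· ≤ ·) := by
  have hd : Disjoint s t := by
    rw [Finset.disjoint_left]
    intro a has hat
    exact absurd (h a has a hat) (lt_irrefl a)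
  refine (fun hp h2 => List.Perm.eq_of_pairwise' (Finset.pairwise_sort _ _) h2 hp) ?_ ?_
  · refine Multiset.coe_eq_coe.1 ?_
    show ((s ∪ t).sort (· ≤ ·) : Multiset (Fin L)) =
      ((s.sort (· ≤ ·) ++ t.sort (· ≤ ·) : List (Fin L)) : Multiset (Fin L))
    rw [show ((s.sort (· ≤ ·) ++ t.sort (· ≤ ·) : List (Fin L)) : Multiset (Fin L)) =
        (s.sort (· ≤ ·) : Multiset (Fin L)) + (t.sort (· ≤ ·) : Multiset (Fin L)) from rfl,
      Finset.sort_eq, Finset.sort_eq, Finset.sort_eq, ← Finset.disjUnion_eq_union s t hd]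
    rfl
  · rw [List.pairwise_append]
    exact ⟨Finset.pairwise_sort _ _, Finset.pairwise_sort _ _,
      fun x hx y hy => (h x (by simpa using (Finset.mem_sort _).1 hx)
        y (by simpa using (Finset.mem_sort _).1 hy)).le⟩

end SlaterAux

open SlaterAux
theorem slater_bond_dimension_bound {N L : ℕ}
    (U : Matrix (Fin N) (Fin L) ℝ) (hU : U * Uᵀ = 1)
    (k : ℕ) (hk1 : 1 ≤ k) (hk2 : k ≤ L - 1) :
    (slaterReshape U k).rank ≤ 2 ^ N := by
  classical
  set F : Fin (2 ^ k) → ExteriorAlgebra ℝ (Fin N → ℝ) := fun a =>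
    prodU U (((Finset.univ.filter fun p : Fin L => p.val < k ∧ a.val.testBit p.val)).sort (· ≤ ·))
    with hF
  set G : Fin (2 ^ (L - k)) → ExteriorAlgebra ℝ (Fin N → ℝ) := fun b =>
    prodU U (((Finset.univ.filter fun p : Fin L =>
      k ≤ p.val ∧ b.val.testBit (p.val - k))).sort (· ≤ ·)) with hG
  have key : ∀ a b, slaterReshape U k a b = lamE N (F a * G b) := by
    intro a b
    rw [slaterReshape, slaterEntry_eq]
    have hsplit : (Finset.univ.filter fun p : Fin L =>
        (if p.val < k then a.val.testBit p.val else b.val.testBit (p.val - k)) = true) =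
        (Finset.univ.filter fun p : Fin L => p.val < k ∧ a.val.testBit p.val) ∪
        (Finset.univ.filter fun p : Fin L => k ≤ p.val ∧ b.val.testBit (p.val - k)) := by
      ext p
      by_cases hp : p.val < k <;>
        simp [hp, Finset.mem_filter, Finset.mem_union, not_lt.1, le_of_not_gt]
    rw [hsplit, sort_union_of_lt, prodU_append]
    intro x hx y hy
    simp only [Finset.mem_filter] at hx hy
    exact Fin.lt_def.2 (lt_of_lt_of_le hx.2.1 hy.2.1)
  have hGmem : ∀ b, G b ∈ Wspan N := fun b => prodU_mem U _
  choose c hc using fun b => (Submodule.mem_span_range_iff_exists_fun ℝ).1 (hGmem b)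
  set P : Matrix (Fin (2 ^ k)) (Finset (Fin N)) ℝ :=
    fun a s => lamE N (F a * mlE N (s.sort (· ≤ ·))) with hP
  set Q : Matrix (Finset (Fin N)) (Fin (2 ^ (L - k))) ℝ := fun s b => c b s with hQ
  have hPQ : slaterReshape U k = P * Q := by
    ext a b
    rw [key a b, ← hc b, Finset.mul_sum, map_sum, Matrix.mul_apply]
    congr 1
    ext s
    rw [mul_smul_comm, _root_.map_smul, smul_eq_mul, mul_comm]
  rw [hPQ]
  calc (P * Q).rank ≤ P.rank := Matrix.rank_mul_le_left P Q
    _ ≤ Fintype.card (Finset (Fin N)) := Matrix.rank_le_card_width P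
    _ = 2 ^ N := by simp [Fintype.card_finset]
end

section
/- Sharpness of the bond dimension bound: Let L = 2N and let U ∈ ℝ^{N×2N} be the matrix with entries U_{m,m} = U_{m,m+N} = 1/√2 for m = 1,...,N and all other entries 0 (so U Uᵀ = Id_N). For k = N, the matrix Ψ ∈ ℝ^{2^N × 2^N} defined by Ψ_{(μ_1..μ_N),(μ_{N+1}..μ_{2N})} = det of the N columns of U at the positions of the 1's (if exactly N entries of μ equal 1, else 0) has rank exactly 2^N. -/
open Matrix

/- ### auxiliary development -/

noncomputable def myU (N : ℕ) : Matrix (Fin N) (Fin (2 * N)) ℝ :=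
  fun m p => if p.val = m.val ∨ p.val = m.val + N then 1 / Real.sqrt 2 else (0 : ℝ)

def oFun (N : ℕ) (a : Fin (2 ^ N)) (b : Fin (2 ^ (2 * N - N))) : Fin (2 * N) → Bool :=
  fun p => if p.val < N then a.val.testBit p.val else b.val.testBit (p.val - N)

def sFin (N : ℕ) (a : Fin (2 ^ N)) (b : Fin (2 ^ (2 * N - N))) : Finset (Fin (2 * N)) :=
  Finset.univ.filter fun p => oFun N a b p = true

def pL {N : ℕ} (j : Fin N) : Fin (2 * N) := ⟨j.val, by omega⟩
def pR {N : ℕ} (j : Fin N) : Fin (2 * N) := ⟨j.val + N, by have := j.isLt; omega⟩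

lemma mem_sFin_pL {N : ℕ} {a : Fin (2 ^ N)} {b : Fin (2 ^ (2 * N - N))} (j : Fin N) :
    pL j ∈ sFin N a b ↔ a.val.testBit j.val = true := by
  rw [sFin, Finset.mem_filter]; simp only [Finset.mem_univ, true_and, oFun]
  rw [if_pos (show (pL j).val < N from j.isLt)]
  rfl

lemma mem_sFin_pR {N : ℕ} {a : Fin (2 ^ N)} {b : Fin (2 ^ (2 * N - N))} (j : Fin N) :
    pR j ∈ sFin N a b ↔ b.val.testBit j.val = true := by
  rw [sFin, Finset.mem_filter]; simp only [Finset.mem_univ, true_and, oFun]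
  rw [if_neg (show ¬ (pR j).val < N by simp [pR])]
  show b.val.testBit (j.val + N - N) = true ↔ _
  rw [Nat.add_sub_cancel]

/-- the "fold" map -/
def piFold {N : ℕ} (hN : 0 < N) (p : Fin (2 * N)) : Fin N :=
  if h : p.val < N then ⟨p.val, h⟩ else ⟨p.val - N, by have := p.isLt; omega⟩

lemma piFold_eq_iff {N : ℕ} (hN : 0 < N) (p : Fin (2 * N)) (m : Fin N) :
    piFold hN p = m ↔ (p.val = m.val ∨ p.val = m.val + N) := by
  unfold piFold
  have hp := p.isLt
  have hm := m.isLt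
  split_ifs with h <;> rw [Fin.ext_iff] <;> simp <;> omega

lemma piFold_pL {N : ℕ} (hN : 0 < N) (j : Fin N) : piFold hN (pL j) = j := by
  rw [piFold_eq_iff]; left; rfl

lemma piFold_pR {N : ℕ} (hN : 0 < N) (j : Fin N) : piFold hN (pR j) = j := by
  rw [piFold_eq_iff]; right; rfl

/-- zero case: if the bits agree at some position, the Slater entry vanishes. -/
lemma myA_zero (N : ℕ) (a : Fin (2 ^ N)) (b : Fin (2 ^ (2 * N - N))) (m : Fin N)
    (hm : a.val.testBit m.val = b.val.testBit m.val) :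
    slaterEntry (myU N) (oFun N a b) = 0 := by
  classical
  rw [slaterEntry]
  split_ifs with h
  swap
  · rfl
  have hNpos : 0 < N := m.pos
  have key : ∃ m' : Fin N, pL m' ∉ sFin N a b ∧ pR m' ∉ sFin N a b := by
    rcases hb : a.val.testBit m.val with _ | _
    · -- both false
      refine ⟨m, ?_, ?_⟩
      · rw [mem_sFin_pL]; simp [hb]
      · rw [mem_sFin_pR]; rw [hb] at hm; simp [← hm]
    · -- both true: pigeonhole
      have hLm : pL m ∈ sFin N a b := (mem_sFin_pL m).2 hb
      have hRm : pR m ∈ sFin N a b := (mem_sFin_pR m).2 (hm ▸ hb)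
      have hne : pL m ≠ pR m := by
        intro hcon
        have := congrArg Fin.val hcon
        simp [pL, pR] at this
        omega
      set S := sFin N a b with hS
      set T := S.image (piFold hNpos) with hT
      have hsub : T ⊆ (S.erase (pR m)).image (piFold hNpos) := by
        intro x hx
        rw [hT, Finset.mem_image] at hx
        obtain ⟨p, hp, rfl⟩ := hx
        by_cases hpe : p = pR m
        · subst hpe
          rw [Finset.mem_image]
          exact ⟨pL m, Finset.mem_erase.2 ⟨hne, hLm⟩, by rw [piFold_pL, piFold_pR]⟩
        · rw [Finset.mem_image]
          exact ⟨p, Finset.mem_erase.2 ⟨hpe, hp⟩, rfl⟩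
      have hcard : T.card < N := by
        have h1 : T.card ≤ ((S.erase (pR m)).image (piFold hNpos)).card :=
          Finset.card_le_card hsub
        have h2 : ((S.erase (pR m)).image (piFold hNpos)).card ≤ (S.erase (pR m)).card :=
          Finset.card_image_le
        have h3 : (S.erase (pR m)).card = S.card - 1 := Finset.card_erase_of_mem hRm
        have h4 : S.card = N := h
        omega
      have hne_univ : T ≠ Finset.univ := by
        intro hcon
        rw [hcon, Finset.card_univ, Fintype.card_fin] at hcard
        omega
      obtain ⟨m', _, hm'⟩ := Finset.exists_of_ssubset (Finset.ssubset_univ_iff.2 hne_univ)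
      refine ⟨m', ?_, ?_⟩
      · intro hcon
        exact hm' (Finset.mem_image.2 ⟨pL m', hcon, piFold_pL hNpos m'⟩)
      · intro hcon
        exact hm' (Finset.mem_image.2 ⟨pR m', hcon, piFold_pR hNpos m'⟩)
  obtain ⟨m', hL', hR'⟩ := key
  apply Matrix.det_eq_zero_of_row_eq_zero m'
  intro i
  have hmem : (sFin N a b).orderEmbOfFin h i ∈ sFin N a b :=
    Finset.orderEmbOfFin_mem _ h i
  rw [Matrix.submatrix_apply]
  simp only [id, myU]
  rw [if_neg]
  rintro (hc | hc)
  · have he : (sFin N a b).orderEmbOfFin h i = pL m' := Fin.ext hc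
    exact hL' (he ▸ hmem)
  · have he : (sFin N a b).orderEmbOfFin h i = pR m' := Fin.ext hc
    exact hR' (he ▸ hmem)

lemma card_sFin (N : ℕ) (a : Fin (2 ^ N)) (b : Fin (2 ^ (2 * N - N)))
    (hc : ∀ m : Fin N, a.val.testBit m.val ≠ b.val.testBit m.val) :
    (sFin N a b).card = N := by
  classical
  rcases Nat.eq_zero_or_pos N with hN | hN
  · subst hN
    have h1 := Finset.card_le_univ (sFin 0 a b)
    simp only [Finset.card_univ, Fintype.card_fin] at h1
    omega
  have hinj : Set.InjOn (piFold hN) (sFin N a b) := by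
    intro p hp p' hp' hpp
    by_contra hne
    set m0 := piFold hN p with hm0
    have h1 : p.val = m0.val ∨ p.val = m0.val + N := (piFold_eq_iff hN p m0).1 rfl
    have h2 : p'.val = m0.val ∨ p'.val = m0.val + N := (piFold_eq_iff hN p' m0).1 hpp.symm
    have hvne : p.val ≠ p'.val := fun hcon => hne (Fin.ext hcon)
    have hLS : pL m0 ∈ sFin N a b := by
      rcases h1 with h1 | h1
      · have : p = pL m0 := Fin.ext h1
        rwa [this] at hp
      · rcases h2 with h2 | h2
        · have : p' = pL m0 := Fin.ext h2
          rwa [this] at hp'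
        · omega
    have hRS : pR m0 ∈ sFin N a b := by
      rcases h1 with h1 | h1
      · rcases h2 with h2 | h2
        · omega
        · have : p' = pR m0 := Fin.ext h2
          rwa [this] at hp'
      · have : p = pR m0 := Fin.ext h1
        rwa [this] at hp
    exact hc m0 (((mem_sFin_pL m0).1 hLS).trans ((mem_sFin_pR m0).1 hRS).symm)
  have hsurj : (sFin N a b).image (piFold hN) = Finset.univ := by
    apply Finset.eq_univ_of_forall
    intro m
    rw [Finset.mem_image]
    rcases ha : a.val.testBit m.val with _ | _
    · have hbm : b.val.testBit m.val = true := by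
        have := hc m
        rw [ha] at this
        revert this
        cases b.val.testBit m.val <;> simp
      exact ⟨pR m, (mem_sFin_pR m).2 hbm, piFold_pR hN m⟩
    · exact ⟨pL m, (mem_sFin_pL m).2 ha, piFold_pL hN m⟩
  have := Finset.card_image_of_injOn (f := piFold hN) (s := sFin N a b) hinj
  rw [hsurj, Finset.card_univ, Fintype.card_fin] at this
  omega

lemma myA_sq (N : ℕ) (a : Fin (2 ^ N)) (b : Fin (2 ^ (2 * N - N)))
    (hc : ∀ m : Fin N, a.val.testBit m.val ≠ b.val.testBit m.val) :
    slaterEntry (myU N) (oFun N a b) ^ 2 = (1 / 2 : ℝ) ^ N := by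
  classical
  have hcard : (Finset.univ.filter fun p => oFun N a b p = true).card = N :=
    card_sFin N a b hc
  rw [slaterEntry, dif_pos hcard]
  set f := (Finset.univ.filter fun p => oFun N a b p = true).orderEmbOfFin hcard with hf
  set M := (myU N).submatrix id ⇑f with hM
  have hsq : M.det ^ 2 = (M * Mᵀ).det := by
    rw [Matrix.det_mul, Matrix.det_transpose, sq]
  rw [hsq]
  have hfS : ∀ i, f i ∈ sFin N a b := fun i => Finset.orderEmbOfFin_mem _ hcard i
  have hrange : ∀ p ∈ sFin N a b, ∃ i, f i = p := by
    intro p hp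
    have : p ∈ Set.range ⇑f := by
      rw [hf, Finset.range_orderEmbOfFin]
      exact hp
    exact this
  have hMM : M * Mᵀ = ((1 / 2 : ℝ)) • (1 : Matrix (Fin N) (Fin N) ℝ) := by
    ext m m'
    rw [Matrix.mul_apply]
    simp only [Matrix.transpose_apply, hM, Matrix.submatrix_apply, id]
    by_cases hmm : m = m'
    · subst hmm
      -- find the unique column hitting row m
      obtain ⟨p0, hp0S, hp0val, huniq⟩ :
          ∃ p0, p0 ∈ sFin N a b ∧ (p0.val = m.val ∨ p0.val = m.val + N) ∧
            ∀ p ∈ sFin N a b, (p.val = m.val ∨ p.val = m.val + N) → p = p0 := by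
        rcases ha : a.val.testBit m.val with _ | _
        · have hbm : b.val.testBit m.val = true := by
            cases hbv : b.val.testBit m.val
            · exact absurd (by rw [ha, hbv]) (hc m)
            · rfl
          refine ⟨pR m, (mem_sFin_pR m).2 hbm, Or.inr rfl, ?_⟩
          intro p hp hpv
          rcases hpv with hpv | hpv
          · exfalso
            have : p = pL m := Fin.ext hpv
            rw [this, mem_sFin_pL, ha] at hp
            exact Bool.false_ne_true hp
          · exact Fin.ext hpv
        · have hbm : b.val.testBit m.val = false := by
            cases hbv : b.val.testBit m.val
            · rfl
            · exact absurd (by rw [ha, hbv]) (hc m)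
          refine ⟨pL m, (mem_sFin_pL m).2 ha, Or.inl rfl, ?_⟩
          intro p hp hpv
          rcases hpv with hpv | hpv
          · exact Fin.ext hpv
          · exfalso
            have : p = pR m := Fin.ext hpv
            rw [this, mem_sFin_pR, hbm] at hp
            exact Bool.false_ne_true hp
      obtain ⟨i0, hi0⟩ := hrange p0 hp0S
      rw [Finset.sum_eq_single i0]
      · rw [hi0]
        simp only [myU, if_pos hp0val]
        rw [Matrix.smul_apply, Matrix.one_apply_eq, smul_eq_mul, mul_one,
          div_mul_div_comm, one_mul, Real.mul_self_sqrt (by norm_num : (2:ℝ) ≥ 0)]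
      · intro i _ hii
        simp only [myU]
        rw [if_neg, zero_mul]
        intro hcon
        have : f i = p0 := huniq (f i) (hfS i) hcon
        exact hii (f.injective (this.trans hi0.symm))
      · intro hcon
        exact absurd (Finset.mem_univ i0) hcon
    · rw [Matrix.smul_apply, Matrix.one_apply_ne hmm, smul_eq_mul, mul_zero]
      apply Finset.sum_eq_zero
      intro i _
      have hv : m.val ≠ m'.val := fun hcon => hmm (Fin.ext hcon)
      have hmlt := m.isLt
      have hmlt' := m'.isLt
      simp only [myU]
      split_ifs with h1 h2 <;> first
        | omega
        | rw [zero_mul]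
        | rw [mul_zero]
  rw [hMM, Matrix.det_smul, Matrix.det_one, mul_one, Fintype.card_fin]

theorem slater_bond_dimension_sharp' (N : ℕ) :
    (slaterReshape (myU N) N).rank = 2 ^ N := by
  classical
  set A := slaterReshape (myU N) N with hA
  have hApp : ∀ a b, A a b = slaterEntry (myU N) (oFun N a b) := fun a b => rfl
  have hpow : 2 * N - N = N := by omega
  have hblt : ∀ a : Fin (2 ^ N), (2 ^ N - 1) ^^^ a.val < 2 ^ (2 * N - N) := by
    intro a
    rw [hpow]
    exact Nat.xor_lt_two_pow (by have := Nat.one_le_two_pow (n := N); omega) a.isLt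
  set b0 : Fin (2 ^ N) → Fin (2 ^ (2 * N - N)) := fun a => ⟨(2 ^ N - 1) ^^^ a.val, hblt a⟩
    with hb0
  have hb0bit : ∀ (a : Fin (2 ^ N)) (i : ℕ), i < N →
      (b0 a).val.testBit i = !(a.val.testBit i) := by
    intro a i hi
    show ((2 ^ N - 1) ^^^ a.val).testBit i = _
    rw [Nat.testBit_xor, Nat.testBit_two_pow_sub_one, decide_eq_true hi, Bool.true_xor]
  have hcompat : ∀ a : Fin (2 ^ N), ∀ m : Fin N,
      a.val.testBit m.val ≠ (b0 a).val.testBit m.val := by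
    intro a m
    rw [hb0bit a m.val m.isLt]
    cases a.val.testBit m.val <;> simp
  have hhi : ∀ (x : ℕ) (hx : x < 2 ^ N) (i : ℕ), ¬ i < N → x.testBit i = false := by
    intro x hx i hi
    exact Nat.testBit_eq_false_of_lt
      (lt_of_lt_of_le hx (Nat.pow_le_pow_right (by norm_num) (by omega)))
  have huniq : ∀ (a : Fin (2 ^ N)) (b : Fin (2 ^ (2 * N - N))), b ≠ b0 a →
      ∃ m : Fin N, a.val.testBit m.val = b.val.testBit m.val := by
    intro a b hne
    by_contra hcon
    push_neg at hcon
    apply hne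
    apply Fin.ext
    apply Nat.eq_of_testBit_eq
    intro i
    by_cases hi : i < N
    · have h1 := hcon ⟨i, hi⟩
      have h2 := hb0bit a i hi
      simp only at h1 h2
      rw [h2]
      revert h1
      cases a.val.testBit i <;> cases b.val.testBit i <;> simp
    · have hb1 : b.val < 2 ^ N := lt_of_lt_of_le b.isLt (le_of_eq (by rw [hpow]))
      have hb2 : (b0 a).val < 2 ^ N :=
        lt_of_lt_of_le (b0 a).isLt (le_of_eq (by rw [hpow]))
      rw [hhi b.val hb1 i hi, hhi (b0 a).val hb2 i hi]
  have hGram : A * Aᵀ = ((1 / 2 : ℝ) ^ N) • (1 : Matrix (Fin (2 ^ N)) (Fin (2 ^ N)) ℝ) := by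
    ext a a'
    rw [Matrix.mul_apply]
    simp only [Matrix.transpose_apply]
    by_cases h : a = a'
    · subst h
      rw [Finset.sum_eq_single (b0 a)]
      · rw [Matrix.smul_apply, Matrix.one_apply_eq, smul_eq_mul, mul_one, ← sq,
          hApp, myA_sq N a (b0 a) (hcompat a)]
      · intro b _ hb
        obtain ⟨m, hm⟩ := huniq a b hb
        rw [hApp, myA_zero N a b m hm, zero_mul]
      · intro hcon
        exact absurd (Finset.mem_univ _) hcon
    · rw [Matrix.smul_apply, Matrix.one_apply_ne h, smul_eq_mul, mul_zero]
      apply Finset.sum_eq_zero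
      intro b _
      by_cases hb : b = b0 a
      · subst hb
        have hex : ∃ m : Fin N, a'.val.testBit m.val = (b0 a).val.testBit m.val := by
          by_contra hcon
          push_neg at hcon
          apply h
          apply Fin.ext
          apply Nat.eq_of_testBit_eq
          intro i
          by_cases hi : i < N
          · have h1 := hcon ⟨i, hi⟩
            have h2 := hcompat a ⟨i, hi⟩
            simp only at h1 h2
            revert h1 h2
            cases a.val.testBit i <;> cases a'.val.testBit i <;>
              cases (b0 a).val.testBit i <;> simp
          · rw [hhi a.val a.isLt i hi, hhi a'.val a'.isLt i hi]
        obtain ⟨m, hm⟩ := hex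
        rw [hApp a' (b0 a), myA_zero N a' (b0 a) m hm, mul_zero]
      · obtain ⟨m, hm⟩ := huniq a b hb
        rw [hApp a b, myA_zero N a b m hm, zero_mul]
  have hrankG : (A * Aᵀ).rank = 2 ^ N := by
    rw [hGram, Matrix.rank_of_isUnit, Fintype.card_fin]
    rw [Matrix.isUnit_iff_isUnit_det, Matrix.det_smul, Matrix.det_one, mul_one]
    exact (pow_ne_zero _ (by norm_num : ((1:ℝ)/2)^N ≠ 0)).isUnit
  refine le_antisymm ?_ ?_
  · exact (A.rank_le_card_height).trans_eq (Fintype.card_fin _)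
  · calc (2:ℕ) ^ N = (A * Aᵀ).rank := hrankG.symm
      _ ≤ A.rank := Matrix.rank_mul_le_left A Aᵀ

theorem slater_bond_dimension_sharp (N : ℕ) :
    (slaterReshape (fun (m : Fin N) (p : Fin (2 * N)) =>
        if p.val = m.val ∨ p.val = m.val + N then 1 / Real.sqrt 2 else (0 : ℝ)) N).rank
      = 2 ^ N := slater_bond_dimension_sharp' N
end

section
/- Let U ∈ ℝ^{N×L} with U Uᵀ = Id_N, write U = (V_k W_k) with V_k ∈ ℝ^{N×k}, W_k ∈ ℝ^{N×(L−k)}, k ≤ L−N, V_k and W_k full rank. For 0 ≤ j ≤ min(k,N), define C_j ∈ ℝ^{binom(k,j) × binom(L−k, N−j)} with entries (C_j)_{σ,ρ} = det(U_{σ ∪ (k+ρ)}) for σ a j-subset of {1,...,k} and ρ an (N−j)-subset of {1,...,L−k} (columns in increasing order). Then C_j C_jᵀ = det(W_k W_kᵀ) · Λ^j(V_kᵀ (W_k W_kᵀ)^{-1} V_k), where Λ^j denotes the j-th compound matrix. -/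
/-!
Since every column of `σ` precedes every column of `k + ρ`, the entry `(C_j)_{σ,ρ}` is
`det [V_σ | W_ρ]`, so `(C_j C_jᵀ)_{σ,τ} = ∑_ρ det [V_σ | W_ρ] det [V_τ | W_ρ]`.

For `N × j` matrices `A, B` and `G = W Wᵀ`, Cauchy–Binet over `ℝ[X]` applied to `[B | X W]` and
`[A | W]` expands `det (X G + B Aᵀ)` over the `N`-sets `S` of columns, the term of `S` carrying
`X ^ #(S ∩ W)`. Its coefficient of `X ^ (N - j)` thus only sees the sets `S` containing the `j`
first columns, and equals `∑_ρ det [A | W_ρ] det [B | W_ρ]`. On the other hand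
`X G + B Aᵀ = G · charmatrix (-(G⁻¹ B) Aᵀ)`, and `charpoly (P Q) = X ^ (N - j) charpoly (Q P)`
turns this into `det G · X ^ (N - j) · charpoly (-Aᵀ G⁻¹ B)`, whose coefficient of `X ^ (N - j)`
is `det G · det (Aᵀ G⁻¹ B)`: for `A = V_σ`, `B = V_τ` this is `det G` times the `(σ, τ)` entry
of `Λ^j (Vᵀ G⁻¹ V)`. Here `G` is invertible because `W` has full row rank.
-/

open Matrix

open Finset Function Polynomial

theorem Function.Injective.exists_perm_eq_comp {κ : Type*} {n : ℕ} {f g : Fin n → κ}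
    (hg : Injective g) (hgf : ∀ i, g i ∈ Set.range f) : ∃ σ : Equiv.Perm (Fin n), g = f ∘ σ := by
  choose σ hσ using hgf
  have hσ_inj : Injective σ := fun a b hab => hg (by rw [← hσ a, ← hσ b, hab])
  exact ⟨Equiv.ofBijective σ (Finite.injective_iff_bijective.1 hσ_inj),
    funext fun i => (hσ i).symm⟩

theorem Finset.image_univ_eq_of_injective {κ : Type*} [DecidableEq κ] {n : ℕ} {S : Finset κ}
    (hS : S.card = n) {f : Fin n → κ} (hf : Injective f) (hfS : ∀ i, f i ∈ S) :
    univ.image f = S :=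
  eq_of_subset_of_card_le (by simpa [subset_iff] using hfS)
    (by rw [card_image_of_injective _ hf, hS, card_univ, Fintype.card_fin])

theorem Finset.prod_sum_elim_one_const {M α β : Type*} [CommMonoid M] (S : Finset (α ⊕ β))
    (x : M) : ∏ c ∈ S, Sum.elim (fun _ => 1) (fun _ => x) c = x ^ S.toRight.card := by
  conv_lhs => rw [← toLeft_disjSum_toRight (u := S)]
  simp [prod_disjSum]

theorem Finset.sum_ite_card_toRight_eq {α β M : Type*} [Fintype α] [Fintype β]
    [AddCommMonoid M] {N n : ℕ} (h : N = Fintype.card α + n)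
    (f : {S : Finset (α ⊕ β) // S.card = N} → M) :
    ∑ S, (if n = S.1.toRight.card then f S else 0) =
      ∑ ρ : {s : Finset β // s.card = n},
        f ⟨univ.disjSum ρ.1, by rw [card_disjSum, card_univ, ρ.2, h]⟩ := by
  have hdisjSum : ∀ S : {S : Finset (α ⊕ β) // S.card = N}, n = S.1.toRight.card →
      univ.disjSum S.1.toRight = S.1 := fun S hn => by
    have hleft : S.1.toLeft = univ := eq_univ_of_card _ <| by
      have := card_toLeft_add_card_toRight (u := S.1)
      have := S.2
      omega
    rw [← hleft, toLeft_disjSum_toRight]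
  rw [← sum_filter]
  refine sum_bij' (fun S hS => ⟨S.1.toRight, (mem_filter.1 hS).2.symm⟩)
    (fun ρ _ => ⟨univ.disjSum ρ.1, by rw [card_disjSum, card_univ, ρ.2, h]⟩)
    (fun _ _ => mem_univ _) (fun ρ _ => by simp [ρ.2])
    (fun S hS => Subtype.ext (hdisjSum S (mem_filter.1 hS).2)) (fun _ _ => by simp)
    (fun S hS => ?_)
  congr 1
  exact (Subtype.ext (hdisjSum S (mem_filter.1 hS).2)).symm

theorem Fin.strictMono_append {α : Type*} [Preorder α] {a b : ℕ} {f : Fin a → α}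
    {g : Fin b → α} (hf : StrictMono f) (hg : StrictMono g) (hfg : ∀ x y, f x < g y) :
    StrictMono (Fin.append f g) := by
  intro x y hxy
  cases x using Fin.addCases with
  | left x => cases y using Fin.addCases with
    | left y => simpa using hf ((Fin.strictMono_castAdd b).lt_iff_lt.1 hxy)
    | right y => simpa using hfg x y
  | right x => cases y using Fin.addCases with
    | left y => exact absurd hxy (by simp only [Fin.lt_def, Fin.val_castAdd, Fin.val_natAdd]; omega)
    | right y => simpa using hg ((Fin.natAdd_lt_natAdd_iff a).1 hxy)

theorem Finset.orderEmbOfFin_map {α β : Type*} [LinearOrder α] [LinearOrder β] (s : Finset α)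
    {f : α ↪ β} (hf : StrictMono f) {k : ℕ} (h : s.card = k) (h' : (s.map f).card = k)
    (i : Fin k) : (s.map f).orderEmbOfFin h' i = f (s.orderEmbOfFin h i) :=
  (congrFun (orderEmbOfFin_unique h' (fun i => mem_map_of_mem f (orderEmbOfFin_mem s h i))
    (hf.comp (s.orderEmbOfFin h).strictMono)) i).symm

theorem Finset.orderEmbOfFin_union_of_forall_lt {α : Type*} [LinearOrder α] {s t : Finset α}
    {a b N : ℕ} (hs : s.card = a) (ht : t.card = b) (hst : ∀ x ∈ s, ∀ y ∈ t, x < y)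
    (h : (s ∪ t).card = N) (hN : N = a + b) (i : Fin N) :
    (s ∪ t).orderEmbOfFin h i =
      Fin.append (s.orderEmbOfFin hs) (t.orderEmbOfFin ht) (i.cast hN) := by
  have hmono : StrictMono fun i : Fin N =>
      Fin.append (s.orderEmbOfFin hs) (t.orderEmbOfFin ht) (i.cast hN) :=
    (Fin.strictMono_append (s.orderEmbOfFin hs).strictMono (t.orderEmbOfFin ht).strictMono
      fun x y => hst _ (orderEmbOfFin_mem s hs x) _ (orderEmbOfFin_mem t ht y)).comp
      (Fin.cast_strictMono hN)
  refine (congrFun (orderEmbOfFin_unique h (fun i => ?_) hmono) i).symm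
  cases i.cast hN using Fin.addCases <;> simp [orderEmbOfFin_mem]

namespace Matrix

variable {R : Type*} [CommRing R]

section CauchyBinet

variable {κ : Type*} {n : ℕ}

theorem det_submatrix_mul_det_submatrix_of_range_subset (A B : Matrix (Fin n) κ R)
    {f g : Fin n → κ} (hg : Injective g) (hgf : ∀ i, g i ∈ Set.range f) :
    (A.submatrix id g).det * (B.submatrix id g).det =
      (A.submatrix id f).det * (B.submatrix id f).det := by
  obtain ⟨σ, rfl⟩ := hg.exists_perm_eq_comp hgf
  have hperm : ∀ M : Matrix (Fin n) κ R,
      (M.submatrix id (f ∘ σ)).det = Equiv.Perm.sign σ * (M.submatrix id f).det :=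
    fun M => det_permute' σ (M.submatrix id f)
  rw [hperm, hperm, mul_mul_mul_comm, ← Int.cast_mul, ← Units.val_mul, Int.units_mul_self,
    Units.val_one, Int.cast_one, one_mul]

theorem det_submatrix_eq_zero_of_not_injective_s15 (A : Matrix (Fin n) κ R) {p : Fin n → κ}
    (hp : ¬ Injective p) : (A.submatrix id p).det = 0 := by
  obtain ⟨i, i', hii', hne⟩ := Function.not_injective_iff.1 hp
  exact det_zero_of_column_eq hne fun r => by simp [hii']

theorem det_mul_transpose_eq_sum_prod_mul_det [Fintype κ] (A B : Matrix (Fin n) κ R) :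
    (A * Bᵀ).det = ∑ p : Fin n → κ, (∏ i, B i (p i)) * (A.submatrix id p).det := by
  calc (A * Bᵀ).det
      = ∑ σ : Equiv.Perm (Fin n), ∑ p : Fin n → κ,
          (Equiv.Perm.sign σ : R) * ∏ i, A (σ i) (p i) * B i (p i) := by
        simp only [det_apply', mul_apply, transpose_apply, prod_univ_sum, mul_sum,
          Fintype.piFinset_univ]
    _ = ∑ p : Fin n → κ, ∑ σ : Equiv.Perm (Fin n),
          (Equiv.Perm.sign σ : R) * ∏ i, A (σ i) (p i) * B i (p i) := sum_comm
    _ = _ := by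
        refine sum_congr rfl fun p _ => ?_
        rw [det_apply', mul_sum]
        refine sum_congr rfl fun σ _ => ?_
        simp only [submatrix_apply, id_eq, prod_mul_distrib]
        ring

theorem sum_perm_prod_mul_det_submatrix_comp (A B : Matrix (Fin n) κ R) (f : Fin n → κ) :
    ∑ σ : Equiv.Perm (Fin n), (∏ i, B i (f (σ i))) * (A.submatrix id (f ∘ σ)).det =
      (A.submatrix id f).det * (B.submatrix id f).det := by
  rw [← det_transpose (B.submatrix id f), det_apply' (B.submatrix id f)ᵀ, mul_sum]
  refine sum_congr rfl fun σ _ => ?_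
  rw [show A.submatrix id (f ∘ σ) = (A.submatrix id f).submatrix id σ from rfl, det_permute']
  simp only [transpose_apply, submatrix_apply, id_eq]
  ring

theorem det_mul_transpose_eq_sum_det_mul_det [Fintype κ] [DecidableEq κ]
    (A B : Matrix (Fin n) κ R) (e : {S : Finset κ // S.card = n} → Fin n → κ)
    (he : ∀ S, Injective (e S)) (heS : ∀ S i, e S i ∈ S.1) :
    (A * Bᵀ).det = ∑ S, (A.submatrix id (e S)).det * (B.submatrix id (e S)).det := by
  have himage : ∀ S (σ : Equiv.Perm (Fin n)), univ.image (e S ∘ σ) = S.1 := fun S σ =>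
    image_univ_eq_of_injective S.2 ((he S).comp σ.injective) fun i => heS S (σ i)
  rw [det_mul_transpose_eq_sum_prod_mul_det, ← sum_filter_of_ne (p := Injective)
    fun p _ hp => by_contra fun hinj => hp (by
      rw [det_submatrix_eq_zero_of_not_injective_s15 A hinj, mul_zero])]
  simp_rw [← sum_perm_prod_mul_det_submatrix_comp A B, ← Fintype.sum_prod_type']
  -- an injection `p` factors uniquely as `e S ∘ σ`, where `S` is its image
  refine (sum_bij (fun Sσ _ => e Sσ.1 ∘ Sσ.2)
    (fun Sσ _ => mem_filter.2 ⟨mem_univ _, (he Sσ.1).comp Sσ.2.injective⟩)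
    (fun Sσ _ Tτ _ h => ?_) (fun p hp => ?_) (fun _ _ => rfl)).symm
  · have hST : Sσ.1 = Tτ.1 := Subtype.ext <| by
      rw [← himage Sσ.1 Sσ.2, ← himage Tτ.1 Tτ.2, h]
    obtain ⟨S, σ⟩ := Sσ
    obtain ⟨T, τ⟩ := Tτ
    obtain rfl : S = T := hST
    exact Prod.ext rfl (Equiv.ext fun i => he S (congrFun h i))
  · have hinj : Injective p := (mem_filter.1 hp).2
    let S : {S : Finset κ // S.card = n} :=
      ⟨univ.image p, by rw [card_image_of_injective _ hinj, card_univ, Fintype.card_fin]⟩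
    obtain ⟨σ, hσ⟩ := hinj.exists_perm_eq_comp (f := e S) fun i => by
      have hmem : p i ∈ univ.image (e S ∘ (1 : Equiv.Perm (Fin n))) := by
        rw [himage]; exact mem_image_of_mem p (mem_univ i)
      obtain ⟨a, -, ha⟩ := mem_image.1 hmem
      exact ⟨a, ha⟩
    exact ⟨(S, σ), mem_univ _, hσ.symm⟩

end CauchyBinet

theorem det_map_C {ι : Type*} [Fintype ι] [DecidableEq ι] (M : Matrix ι ι R) :
    (M.map C).det = C M.det :=
  (RingHom.map_det C M).symm

theorem coeff_det_X_smul_add_mul_transpose {n m : Type*} [Fintype n] [DecidableEq n]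
    [Fintype m] [DecidableEq m] {G : Matrix n n R} (hG : IsUnit G.det) (A B : Matrix n m R)
    (hmn : Fintype.card m ≤ Fintype.card n) :
    (det ((X : R[X]) • G.map C + (A * Bᵀ).map C)).coeff (Fintype.card n - Fintype.card m) =
      G.det * (Bᵀ * G⁻¹ * A).det := by
  have hfactor : (X : R[X]) • G.map C + (A * Bᵀ).map C =
      G.map C * charmatrix (-(G⁻¹ * A) * Bᵀ) := by
    have hGM : G * (-(G⁻¹ * A) * Bᵀ) = -(A * Bᵀ) := by
      rw [Matrix.neg_mul, Matrix.mul_neg, ← Matrix.mul_assoc, ← Matrix.mul_assoc,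
        mul_nonsing_inv _ hG, Matrix.one_mul]
    have hGX : G.map C * scalar n (X : R[X]) = (X : R[X]) • G.map C := by
      ext i k; rw [scalar_apply, mul_diagonal, smul_apply, smul_eq_mul, mul_comm]
    rw [charmatrix, RingHom.mapMatrix_apply, Matrix.mul_sub, ← Matrix.map_mul, hGM, hGX,
      Matrix.map_neg _ (map_neg C), sub_neg_eq_add]
  have hcoeff_zero : (Bᵀ * -(G⁻¹ * A)).charpoly.coeff 0 = (Bᵀ * G⁻¹ * A).det := by
    have h := det_eq_sign_charpoly_coeff (Bᵀ * -(G⁻¹ * A))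
    rw [Matrix.mul_neg, det_neg, ← Matrix.mul_assoc] at h
    rw [Matrix.mul_neg, ← Matrix.mul_assoc]
    exact ((isUnit_neg_one.pow _).mul_left_cancel h).symm
  rw [hfactor, det_mul, det_map_C, ← charpoly, charpoly_mul_comm_of_le _ _ hmn, coeff_C_mul,
    coeff_X_pow_mul', if_pos le_rfl, Nat.sub_self, hcoeff_zero]

def appendCols {ι α : Type*} {N a b : ℕ} (h : N = a + b) (A : Matrix ι (Fin a) α)
    (B : Matrix ι (Fin b) α) : Matrix ι (Fin N) α :=
  of fun r c => Fin.append (A r) (B r) (c.cast h)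

theorem submatrix_append_eq_appendCols {ι κ α : Type*} {N a b : ℕ} (h : N = a + b)
    (M : Matrix ι κ α) (f : Fin a → κ) (g : Fin b → κ) :
    M.submatrix id (fun c => Fin.append f g (c.cast h)) =
      appendCols h (M.submatrix id f) (M.submatrix id g) := by
  ext r c
  simp only [submatrix_apply, appendCols, of_apply, id_eq]
  cases c.cast h using Fin.addCases <;> simp

theorem det_submatrix_fromCols_X_smul {N : ℕ} {κ₁ κ₂ : Type*} (A : Matrix (Fin N) κ₁ R)
    (W : Matrix (Fin N) κ₂ R) (f : Fin N → κ₁ ⊕ κ₂) :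
    ((fromCols (A.map C) ((X : R[X]) • W.map C)).submatrix id f).det =
      C ((fromCols A W).submatrix id f).det *
        ∏ i, Sum.elim (fun _ => (1 : R[X])) (fun _ => X) (f i) := by
  have h : (fromCols (A.map C) ((X : R[X]) • W.map C)).submatrix id f =
      ((fromCols A W).submatrix id f).map C *
        diagonal fun i => Sum.elim (fun _ => (1 : R[X])) (fun _ => X) (f i) := by
    refine Matrix.ext fun r i => ?_
    rw [mul_diagonal]
    rcases hfi : f i with c | c <;> simp [hfi, mul_comm (X : R[X])]
  rw [h, det_mul, det_diagonal, det_map_C]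

theorem det_mul_det_submatrix_fromCols_eq_det_mul_det_appendCols {N j n m : ℕ} (h : N = j + n)
    (A B : Matrix (Fin N) (Fin j) R) (W₁ W₂ : Matrix (Fin N) (Fin m) R)
    {ρ : Finset (Fin m)} (hρ : ρ.card = n) {e : Fin N → Fin j ⊕ Fin m}
    (heρ : univ.image e = univ.disjSum ρ) :
    ((fromCols A W₁).submatrix id e).det * ((fromCols B W₂).submatrix id e).det =
      (appendCols h A (W₁.submatrix id (ρ.orderEmbOfFin hρ))).det *
        (appendCols h B (W₂.submatrix id (ρ.orderEmbOfFin hρ))).det := by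
  let g : Fin N → Fin j ⊕ Fin m :=
    fun c => Fin.append Sum.inl (Sum.inr ∘ ρ.orderEmbOfFin hρ) (c.cast h)
  have hg : Injective g :=
    (Fin.append_injective_iff.2 ⟨Sum.inl_injective,
      Sum.inr_injective.comp (ρ.orderEmbOfFin hρ).injective,
      fun _ _ => Sum.inl_ne_inr⟩).comp (Fin.cast_injective h)
  have hge : ∀ c, g c ∈ Set.range e := fun c => by
    have hmem : g c ∈ univ.image e := by
      rw [heρ]
      simp only [g]
      cases c.cast h using Fin.addCases <;> simp
    simpa using hmem
  rw [← det_submatrix_mul_det_submatrix_of_range_subset _ _ hg hge,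
    submatrix_append_eq_appendCols, submatrix_append_eq_appendCols]
  rfl

theorem coeff_det_X_smul_mul_transpose_add_mul_transpose {N j n m : ℕ} (h : N = j + n)
    (A B : Matrix (Fin N) (Fin j) R) (W₁ W₂ : Matrix (Fin N) (Fin m) R) :
    (det ((X : R[X]) • (W₁ * W₂ᵀ).map C + (A * Bᵀ).map C)).coeff n =
      ∑ ρ : {s : Finset (Fin m) // s.card = n},
        (appendCols h A (W₁.submatrix id (ρ.1.orderEmbOfFin ρ.2))).det *
          (appendCols h B (W₂.submatrix id (ρ.1.orderEmbOfFin ρ.2))).det := by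
  let e : {S : Finset (Fin j ⊕ Fin m) // S.card = N} → Fin N → Fin j ⊕ Fin m :=
    fun S i => (S.1.equivFinOfCardEq S.2).symm i
  have he : ∀ S, Injective (e S) := fun S => Subtype.val_injective.comp (Equiv.injective _)
  have heS : ∀ S i, e S i ∈ S.1 := fun S i => ((S.1.equivFinOfCardEq S.2).symm i).2
  have hprod : fromCols (A.map C) ((X : R[X]) • W₁.map C) * ((fromCols B W₂).map C)ᵀ =
      (X : R[X]) • (W₁ * W₂ᵀ).map C + (A * Bᵀ).map C := by
    rw [fromCols_map, transpose_fromCols, fromCols_mul_fromRows, add_comm, Matrix.smul_mul,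
      ← transpose_map, ← transpose_map, ← Matrix.map_mul, ← Matrix.map_mul]
  -- the power of `X` counts the columns of `S` taken from `W₁`
  have hterm : ∀ S, ((fromCols (A.map C) ((X : R[X]) • W₁.map C)).submatrix id (e S)).det *
      (((fromCols B W₂).map C).submatrix id (e S)).det =
      C (((fromCols A W₁).submatrix id (e S)).det * ((fromCols B W₂).submatrix id (e S)).det) *
        X ^ S.1.toRight.card := by
    intro S
    rw [det_submatrix_fromCols_X_smul, submatrix_map, det_map_C, map_mul,
      ← prod_sum_elim_one_const, ← image_univ_eq_of_injective S.2 (he S) (heS S),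
      prod_image fun a _ b _ hab => he S hab]
    ring
  rw [← hprod, det_mul_transpose_eq_sum_det_mul_det _ _ e he heS, finsetSum_coeff]
  simp_rw [hterm, coeff_C_mul_X_pow]
  rw [sum_ite_card_toRight_eq (by rw [Fintype.card_fin]; exact h)]
  refine sum_congr rfl fun ρ _ => ?_
  let S : {S : Finset (Fin j ⊕ Fin m) // S.card = N} :=
    ⟨univ.disjSum ρ.1, by rw [card_disjSum, card_univ, Fintype.card_fin, ρ.2, h]⟩
  exact det_mul_det_submatrix_fromCols_eq_det_mul_det_appendCols h A B W₁ W₂ ρ.2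
    (image_univ_eq_of_injective S.2 (he S) (heS S))

theorem sum_det_appendCols_mul_det_appendCols {N j n m : ℕ} (h : N = j + n)
    (A B : Matrix (Fin N) (Fin j) R) {W : Matrix (Fin N) (Fin m) R}
    (hW : IsUnit (W * Wᵀ).det) :
    ∑ ρ : {s : Finset (Fin m) // s.card = n},
        (appendCols h A (W.submatrix id (ρ.1.orderEmbOfFin ρ.2))).det *
          (appendCols h B (W.submatrix id (ρ.1.orderEmbOfFin ρ.2))).det =
      (W * Wᵀ).det * (Aᵀ * (W * Wᵀ)⁻¹ * B).det := by
  have hn : Fintype.card (Fin N) - Fintype.card (Fin j) = n := by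
    simp only [Fintype.card_fin]; omega
  simp_rw [mul_comm (appendCols h A _).det]
  rw [← coeff_det_X_smul_mul_transpose_add_mul_transpose h B A W W, ← hn,
    coeff_det_X_smul_add_mul_transpose hW B A (by simp only [Fintype.card_fin]; omega)]

theorem submatrix_transpose_mul_mul {m k l : Type*} [Fintype m] (A : Matrix m k R)
    (G : Matrix m m R) (B : Matrix m k R) (e₁ e₂ : l → k) :
    (Aᵀ * G * B).submatrix e₁ e₂ = (A.submatrix id e₁)ᵀ * G * B.submatrix id e₂ := by
  rw [submatrix_mul _ _ _ id _ bijective_id, submatrix_mul _ _ _ id _ bijective_id,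
    transpose_submatrix, submatrix_id_id]

theorem isUnit_det_of_rank_eq_card {K m : Type*} [Field K] [Fintype m] [DecidableEq m]
    {M : Matrix m m K} (h : M.rank = Fintype.card m) : IsUnit M.det := by
  rw [← isUnit_iff_isUnit_det, ← linearIndependent_rows_iff_isUnit,
    linearIndependent_iff_card_eq_finrank_span, ← h, rank_eq_finrank_span_row]
  rfl

theorem isUnit_det_mul_transpose_of_rank_eq_card {K m n : Type*} [Field K] [LinearOrder K]
    [IsStrictOrderedRing K] [Fintype m] [DecidableEq m] [Fintype n] {W : Matrix m n K}
    (h : W.rank = Fintype.card m) : IsUnit (W * Wᵀ).det :=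
  isUnit_det_of_rank_eq_card (by rw [rank_self_mul_transpose, h])

end Matrix

theorem Cmat_apply_eq_det_appendCols {N L k j : ℕ} (hkL : k ≤ L) (hjN : j ≤ N)
    (U : Matrix (Fin N) (Fin L) ℝ) (σ : {s : Finset (Fin k) // s.card = j})
    (ρ : {s : Finset (Fin (L - k)) // s.card = N - j}) :
    Cmat k hkL U j σ ρ = (appendCols (Nat.add_sub_cancel' hjN).symm
      ((leftBlock U k hkL).submatrix id (σ.1.orderEmbOfFin σ.2))
      ((rightBlock U k).submatrix id (ρ.1.orderEmbOfFin ρ.2))).det := by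
  have hleft : StrictMono (Fin.castLEEmb hkL) := Fin.strictMono_castLE hkL
  have hright : StrictMono (shiftEmb k L) := fun x y hxy =>
    Fin.lt_def.2 (Nat.add_lt_add_left (Fin.lt_def.1 hxy) k)
  set s := σ.1.map (Fin.castLEEmb hkL)
  set t := ρ.1.map (shiftEmb k L)
  have hs : s.card = j := by rw [card_map, σ.2]
  have ht : t.card = N - j := by rw [card_map, ρ.2]
  have hst : ∀ x ∈ s, ∀ y ∈ t, x < y := by
    simp only [s, t, mem_map]
    rintro _ ⟨x, -, rfl⟩ _ ⟨y, -, rfl⟩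
    exact Fin.lt_def.2 (Nat.lt_of_lt_of_le x.2 (Nat.le_add_right k y))
  have hcard : (s ∪ t).card = N := by
    rw [card_union_of_disjoint (disjoint_left.2 fun x hx hx' => (hst x hx x hx').false), hs, ht]
    omega
  have hfilter : univ.filter (fun p => decide (p ∈ s ∪ t) = true) = s ∪ t := by ext; simp
  have hσ : (leftBlock U k hkL).submatrix id (σ.1.orderEmbOfFin σ.2) =
      U.submatrix id (s.orderEmbOfFin hs) := by
    ext r c; rw [submatrix_apply, submatrix_apply, orderEmbOfFin_map _ hleft σ.2]; rfl
  have hρ : (rightBlock U k).submatrix id (ρ.1.orderEmbOfFin ρ.2) =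
      U.submatrix id (t.orderEmbOfFin ht) := by
    ext r c; rw [submatrix_apply, submatrix_apply, orderEmbOfFin_map _ hright ρ.2]; rfl
  change slaterEntry U (fun p => decide (p ∈ s ∪ t)) = _
  rw [slaterEntry]
  simp only [hfilter]
  rw [dif_pos hcard, hσ, hρ, ← submatrix_append_eq_appendCols]
  congr 2
  funext c
  exact orderEmbOfFin_union_of_forall_lt hs ht hst hcard _ c

theorem Cmat_compound_formula_general {N L k j : ℕ} (hNL : N ≤ L) (hkL : k ≤ L)
    (hkLN : k ≤ L - N) (hjN : j ≤ N)
    (U : Matrix (Fin N) (Fin L) ℝ)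
    (hW : (rightBlock U k).rank = min N (L - k)) :
    Cmat k hkL U j * (Cmat k hkL U j)ᵀ =
      (rightBlock U k * (rightBlock U k)ᵀ).det •
        compound j ((leftBlock U k hkL)ᵀ * (rightBlock U k * (rightBlock U k)ᵀ)⁻¹ *
          leftBlock U k hkL) := by
  have hG : IsUnit (rightBlock U k * (rightBlock U k)ᵀ).det :=
    isUnit_det_mul_transpose_of_rank_eq_card (by rw [hW, Fintype.card_fin]; omega)
  ext σ τ
  simp only [mul_apply, transpose_apply, Cmat_apply_eq_det_appendCols hkL hjN]
  rw [sum_det_appendCols_mul_det_appendCols _ _ _ hG, Matrix.smul_apply, smul_eq_mul, compound,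
    submatrix_transpose_mul_mul]

theorem Cmat_compound_formula {N L k j : ℕ} (hNL : N ≤ L) (hkL : k ≤ L)
    (hkLN : k ≤ L - N) (hjN : j ≤ N) (hjk : j ≤ k)
    (U : Matrix (Fin N) (Fin L) ℝ) (hU : U * Uᵀ = 1)
    (hV : (leftBlock U k hkL).rank = min N k)
    (hW : (rightBlock U k).rank = min N (L - k)) :
    Cmat k hkL U j * (Cmat k hkL U j)ᵀ =
      (rightBlock U k * (rightBlock U k)ᵀ).det •
        compound j ((leftBlock U k hkL)ᵀ * (rightBlock U k * (rightBlock U k)ᵀ)⁻¹ *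
          leftBlock U k hkL) :=
  Cmat_compound_formula_general hNL hkL hkLN hjN U hW
end
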